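/- arXiv:1307.7324 — 4 statements merged into one kernel-verified Lean document; each statement's English description precedes it below -/
import Mathlib

section
/- For every complex number q with |q| < 1, the sum of the terms of ∑_{k∈ℤ}(−1)^k q^{k(5k+3)/2} over those k divisible by 3 equals φ(q⁹)·b(q⁹); that is, ∑_{m∈ℤ}(−1)^m q^{3m(15m+3)/2} = φ(q⁹)·b(q⁹). (Lemma 3.3: the part of a(q)φ(q) supported on exponents ≡ 0 mod 3 equals φ(q⁹)b(q⁹).) -/
open scoped BigOperators

/-- The Euler function `φ(q) = ∏_{n=1}^∞ (1 - q^n)`. -/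
noncomputable def eulerPhi (q : ℂ) : ℂ := ∏' n : ℕ, (1 - q ^ (n + 1))

/-- The first Rogers–Ramanujan series
`a(q) = ∏_{n=1}^∞ 1/((1 - q^{5n-2})(1 - q^{5n-3}))`. -/
noncomputable def rrA (q : ℂ) : ℂ :=
  ∏' n : ℕ, ((1 - q ^ (5 * n + 3)) * (1 - q ^ (5 * n + 2)))⁻¹

/-- The second Rogers–Ramanujan series
`b(q) = ∏_{n=1}^∞ 1/((1 - q^{5n-1})(1 - q^{5n-4}))`. -/
noncomputable def rrB (q : ℂ) : ℂ :=
  ∏' n : ℕ, ((1 - q ^ (5 * n + 4)) * (1 - q ^ (5 * n + 1)))⁻¹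

/-- `G(q) = ∏_{n=1}^∞ (1-q^{15n})(1-q^{15n-7})(1-q^{15n-8})
          - q ∏_{n=1}^∞ (1-q^{15n})(1-q^{15n-13})(1-q^{15n-2})`. -/
noncomputable def Gf (q : ℂ) : ℂ :=
  (∏' n : ℕ, (1 - q ^ (15 * n + 15)) * (1 - q ^ (15 * n + 8)) * (1 - q ^ (15 * n + 7)))
  - q * ∏' n : ℕ, (1 - q ^ (15 * n + 15)) * (1 - q ^ (15 * n + 2)) * (1 - q ^ (15 * n + 13))

/-- `H(q) = ∏_{n=1}^∞ (1-q^{15n})(1-q^{15n-4})(1-q^{15n-11})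
          + q ∏_{n=1}^∞ (1-q^{15n})(1-q^{15n-14})(1-q^{15n-1})`. -/
noncomputable def Hf (q : ℂ) : ℂ :=
  (∏' n : ℕ, (1 - q ^ (15 * n + 15)) * (1 - q ^ (15 * n + 11)) * (1 - q ^ (15 * n + 4)))
  + q * ∏' n : ℕ, (1 - q ^ (15 * n + 15)) * (1 - q ^ (15 * n + 1)) * (1 - q ^ (15 * n + 14))

/-!
Put `y = q^9`. Since `3m(15m+3)/2 = 9 (3·m(m+1)/2 + 2·m(m-1)/2)`, the sum is Ramanujan's theta
function `f(-y^3, -y^2)`, which by the Jacobi triple product is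
`(y^2; y^5)_∞ (y^3; y^5)_∞ (y^5; y^5)_∞`, i.e. `φ(y)` with the factors `1 - y^(5n+1)` and
`1 - y^(5n+4)` removed: `φ(y) b(y)`.

The triple product is the limit of its finite form, which is the q-binomial theorem applied to
`∏_{i<2N} (1 - z Q^(i-N))`. The Gaussian binomials `[2N, N+m]_Q` are bounded uniformly in `N`
and `m` and tend to `1/φ(Q)`, so Tannery's theorem passes to the limit.
-/

open Filter Finset Topology

lemma Finset.prod_range_mul_eq_prod_prod_range {M : Type*} [CommMonoid M] (f : ℕ → M)
    (d N : ℕ) :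
    ∏ k ∈ range (d * N), f k = ∏ n ∈ range N, ∏ r ∈ range d, f (d * n + r) := by
  induction N with
  | zero => simp
  | succ N ih => rw [Nat.mul_succ, prod_range_add, ih, prod_range_succ]

lemma HasProd.tendsto_prod_range_prod_range {M : Type*} [CommMonoid M] [TopologicalSpace M]
    {f : ℕ → M} {a : M} (h : HasProd f a) {d : ℕ} (hd : 0 < d) :
    Tendsto (fun N => ∏ n ∈ range N, ∏ r ∈ range d, f (d * n + r)) atTop (𝓝 a) :=
  (h.tendsto_prod_nat.comp (tendsto_id.const_mul_atTop' hd)).congr fun N =>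
    Finset.prod_range_mul_eq_prod_prod_range f d N

section GaussianBinomial

variable {R : Type*} [CommRing R]

/-- The Gaussian binomial coefficient `[M, k]_Q`. -/
def gaussBinom (Q : R) : ℕ → ℕ → R
  | _, 0 => 1
  | 0, _ + 1 => 0
  | M + 1, k + 1 => Q ^ (k + 1) * gaussBinom Q M (k + 1) + gaussBinom Q M k

/-- `(Q; Q)_n`, the partial products of `eulerPhi`. -/
def eulerPartial (Q : R) (n : ℕ) : R := ∏ i ∈ range n, (1 - Q ^ (i + 1))

variable (Q : R)

@[simp] lemma gaussBinom_zero_right (M : ℕ) : gaussBinom Q M 0 = 1 := by cases M <;> rfl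

lemma gaussBinom_of_lt : ∀ {M k : ℕ}, M < k → gaussBinom Q M k = 0
  | 0, _ + 1, _ => rfl
  | M + 1, k + 1, h => by
    rw [gaussBinom, gaussBinom_of_lt (by omega), gaussBinom_of_lt (by omega), mul_zero, add_zero]

lemma gaussBinom_self : ∀ M : ℕ, gaussBinom Q M M = 1
  | 0 => rfl
  | M + 1 => by rw [gaussBinom, gaussBinom_of_lt Q (Nat.lt_succ_self M), gaussBinom_self M]; ring

/-- The q-binomial theorem. -/
theorem prod_one_add_mul_pow (z : R) (M : ℕ) :
    ∏ i ∈ range M, (1 + z * Q ^ i) =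
      ∑ k ∈ range (M + 1), Q ^ k.choose 2 * gaussBinom Q M k * z ^ k := by
  induction M generalizing z with
  | zero => simp [gaussBinom]
  | succ M ih =>
    -- split off the factor `1 + z`; `T k` is the `k`-th term of `ih` at `z * Q`
    set T : ℕ → R := fun k => Q ^ k.choose 2 * gaussBinom Q M k * (z * Q) ^ k
    have hshift : ∀ k, Q ^ (k + 1).choose 2 = Q ^ k.choose 2 * Q ^ k := fun k => by
      rw [Nat.choose_succ_succ', Nat.choose_one_right, pow_add, mul_comm (Q ^ k)]
    have hterm : ∀ k, Q ^ (k + 1).choose 2 * gaussBinom Q (M + 1) (k + 1) * z ^ (k + 1) =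
        T (k + 1) + z * T k := fun k => by
      simp only [T, gaussBinom, hshift]
      ring
    have hT : ∑ k ∈ range (M + 1), T (k + 1) = ∑ k ∈ range (M + 1), T k - 1 := by
      have hlast : T (M + 1) = 0 := by simp [T, gaussBinom_of_lt Q (Nat.lt_succ_self M)]
      have hfirst : T 0 = 1 := by simp [T]
      linear_combination (sum_range_succ' T (M + 1)).symm.trans (sum_range_succ T (M + 1))
        - hfirst + hlast
    rw [prod_range_succ', sum_range_succ', sum_congr rfl fun k _ => hterm k, sum_add_distrib,
      ← mul_sum, hT]
    simp only [T, ← ih (z * Q)]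
    simp only [gaussBinom_zero_right, Nat.choose_zero_succ, pow_zero, mul_assoc, ← pow_succ']
    ring

theorem eulerPartial_mul_eulerPartial_mul_gaussBinom :
    ∀ j k : ℕ,
      eulerPartial Q j * eulerPartial Q k * gaussBinom Q (j + k) k = eulerPartial Q (j + k)
  | j, 0 => by simp [eulerPartial]
  | 0, k + 1 => by simp [eulerPartial, gaussBinom_self]
  | j + 1, k + 1 => by
    have h₁ := eulerPartial_mul_eulerPartial_mul_gaussBinom j (k + 1)
    have h₂ := eulerPartial_mul_eulerPartial_mul_gaussBinom (j + 1) k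
    rw [show j + 1 + (k + 1) = (j + (k + 1)) + 1 by ring, gaussBinom]
    rw [show j + 1 + k = j + (k + 1) by ring] at h₂
    simp only [eulerPartial, prod_range_succ] at h₁ h₂ ⊢
    linear_combination (1 - Q ^ (j + 1)) * Q ^ (k + 1) * h₁ + (1 - Q ^ (k + 1)) * h₂

end GaussianBinomial

section FiniteTripleProduct

lemma two_mul_cast_choose_two (k : ℕ) : 2 * (k.choose 2 : ℤ) = k * (k - 1) := by
  induction k with
  | zero => simp
  | succ k ih => rw [Nat.choose_succ_succ', Nat.choose_one_right]; push_cast; linarith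

lemma sum_Icc_neg_eq_sum_range {M : Type*} [AddCommMonoid M] (f : ℤ → M) (N : ℕ) :
    ∑ m ∈ Icc (-N : ℤ) N, f m = ∑ k ∈ range (2 * N + 1), f (k - N) := by
  refine sum_nbij' (fun m => (m + N).toNat) (fun k => k - N) ?_ ?_ ?_ ?_ ?_ <;>
    intro a ha <;> simp only [mem_Icc, mem_range] at ha ⊢
  all_goals first | omega | (congr 1; omega)

variable {K : Type*} [Field K] {Q z : K}

lemma prod_range_one_sub_div_pow (hQ : Q ≠ 0) (hz : z ≠ 0) (N : ℕ) :
    ∏ i ∈ range N, (1 - z / Q ^ (i + 1)) =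
      (-z) ^ N / Q ^ (N + 1).choose 2 * ∏ i ∈ range N, (1 - Q ^ (i + 1) / z) := by
  induction N with
  | zero => simp
  | succ N ih =>
    rw [prod_range_succ, prod_range_succ, ih, Nat.choose_succ_succ' (N + 1), Nat.choose_one_right,
      pow_add]
    field_simp
    ring

/-- The finite form of the Jacobi triple product identity. -/
theorem prod_range_one_sub_mul_pow_mul_one_sub_pow_div (hQ : Q ≠ 0) (hz : z ≠ 0) (N : ℕ) :
    ∏ i ∈ range N, (1 - z * Q ^ i) * (1 - Q ^ (i + 1) / z) =
      ∑ m ∈ Icc (-N : ℤ) N,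
        (-z) ^ m * Q ^ (m * (m - 1) / 2) * gaussBinom Q (2 * N) (m + N).toNat := by
  -- the q-binomial theorem at `-z / Q^N`, whose factors with `i < N` are `1 - z / Q^(N-i)`
  have hsplit : ∏ i ∈ range (2 * N), (1 + (-z / Q ^ N) * Q ^ i) =
      (∏ i ∈ range N, (1 - z / Q ^ (i + 1))) * ∏ i ∈ range N, (1 - z * Q ^ i) := by
    rw [two_mul, prod_range_add, ← prod_range_reflect]
    congr 1 <;> refine prod_congr rfl fun i hi => ?_
    · have hi : i < N := mem_range.1 hi
      rw [show N - 1 - i = N - (i + 1) by omega, pow_sub₀ Q hQ (by omega)]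
      field_simp
      ring
    · rw [pow_add]
      field_simp
      ring
  rw [prod_one_add_mul_pow, prod_range_one_sub_div_pow hQ hz] at hsplit
  have hpre : (-z) ^ N / Q ^ (N + 1).choose 2 ≠ 0 := by simp [hz, hQ]
  rw [prod_mul_distrib, mul_comm, ← inv_mul_cancel_left₀ hpre (_ * _),
    ← mul_assoc _ (∏ i ∈ range N, _), ← hsplit, sum_Icc_neg_eq_sum_range, mul_sum]
  -- the `k`-th term is the one of index `m = k - N`
  refine sum_congr rfl fun k _ => ?_
  have hexp : ((k : ℤ) - N) * ((k : ℤ) - N - 1) / 2 =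
      ((k.choose 2 + (N + 1).choose 2 : ℕ) : ℤ) - ((N * k : ℕ) : ℤ) := by
    refine Int.ediv_eq_of_eq_mul_right two_ne_zero ?_
    have hN := two_mul_cast_choose_two (N + 1)
    push_cast at hN ⊢
    linear_combination (-1 : ℤ) * two_mul_cast_choose_two k - hN
  rw [show ((k : ℤ) - N + N).toNat = k by omega, hexp, zpow_sub₀ hQ,
    zpow_sub₀ (neg_ne_zero.2 hz)]
  simp only [zpow_natCast]
  rw [pow_add, pow_mul, div_pow]
  field_simp

end FiniteTripleProduct

section Convergence

section NormedField

variable {𝕜 : Type*} [NormedField 𝕜] {x : 𝕜}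

lemma one_sub_pow_ne_zero (hx : ‖x‖ < 1) {k : ℕ} (hk : k ≠ 0) : 1 - x ^ k ≠ 0 := by
  refine sub_ne_zero.2 fun h => (pow_lt_one₀ (norm_nonneg x) hx hk).ne ?_
  rw [← norm_pow, ← h, norm_one]

lemma summable_norm_pow_comp (hx : ‖x‖ < 1) {e : ℕ → ℕ} (he : ∀ n, n ≤ e n) :
    Summable fun n => ‖x ^ e n‖ :=
  (summable_geometric_of_lt_one (norm_nonneg x) hx).of_nonneg_of_le (fun _ => norm_nonneg _)
    fun n => (norm_pow x (e n)).trans_le (pow_le_pow_of_le_one (norm_nonneg x) hx.le (he n))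

variable [CompleteSpace 𝕜]

lemma multipliable_one_sub_pow_comp (hx : ‖x‖ < 1) {e : ℕ → ℕ} (he : ∀ n, n ≤ e n) :
    Multipliable fun n => 1 - x ^ e n := by
  simpa only [sub_eq_add_neg] using multipliable_one_add_of_summable (f := fun n => -x ^ e n)
    (by simpa using summable_norm_pow_comp hx he)

lemma tprod_one_sub_pow_comp_ne_zero (hx : ‖x‖ < 1) {e : ℕ → ℕ} (he : ∀ n, n < e n) :
    ∏' n, (1 - x ^ e n) ≠ 0 := by
  simpa only [sub_eq_add_neg] using tprod_one_add_ne_zero_of_summable (f := fun n => -x ^ e n)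
    (fun n => by simpa [← sub_eq_add_neg] using one_sub_pow_ne_zero hx (he n).ne_bot)
    (by simpa using summable_norm_pow_comp hx fun n => (he n).le)

end NormedField

variable {Q : ℂ}

lemma hasProd_eulerPhi (hQ : ‖Q‖ < 1) : HasProd (fun n => 1 - Q ^ (n + 1)) (eulerPhi Q) :=
  (multipliable_one_sub_pow_comp hQ fun n => n.le_succ).hasProd

lemma eulerPhi_ne_zero (hQ : ‖Q‖ < 1) : eulerPhi Q ≠ 0 :=
  tprod_one_sub_pow_comp_ne_zero hQ fun n => n.lt_succ_self

lemma eulerPartial_ne_zero (hQ : ‖Q‖ < 1) (n : ℕ) : eulerPartial Q n ≠ 0 :=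
  prod_ne_zero_iff.2 fun i _ => one_sub_pow_ne_zero hQ i.succ_ne_zero

lemma tendsto_eulerPartial (hQ : ‖Q‖ < 1) :
    Tendsto (eulerPartial Q) atTop (𝓝 (eulerPhi Q)) :=
  (hasProd_eulerPhi hQ).tendsto_prod_nat

lemma gaussBinom_eq_div (hQ : ‖Q‖ < 1) {M k : ℕ} (hk : k ≤ M) :
    gaussBinom Q M k = eulerPartial Q M / (eulerPartial Q (M - k) * eulerPartial Q k) := by
  obtain ⟨j, rfl⟩ := Nat.exists_eq_add_of_le' hk
  rw [Nat.add_sub_cancel, eq_div_iff (mul_ne_zero (eulerPartial_ne_zero hQ j)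
    (eulerPartial_ne_zero hQ k)), mul_comm]
  exact eulerPartial_mul_eulerPartial_mul_gaussBinom Q j k

lemma exists_norm_gaussBinom_le (hQ : ‖Q‖ < 1) :
    ∃ C, ∀ M k, ‖gaussBinom Q M k‖ ≤ C := by
  obtain ⟨A, hA⟩ := isBounded_iff_forall_norm_le.1 <|
    Metric.isBounded_range_of_tendsto _ (tendsto_eulerPartial hQ)
  obtain ⟨B, hB⟩ := isBounded_iff_forall_norm_le.1 <| Metric.isBounded_range_of_tendsto _ <|
    (tendsto_eulerPartial hQ).inv₀ (eulerPhi_ne_zero hQ)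
  have hA₀ : 0 ≤ A := (norm_nonneg _).trans (hA _ ⟨0, rfl⟩)
  have hB₀ : 0 ≤ B := (norm_nonneg _).trans (hB _ ⟨0, rfl⟩)
  refine ⟨A * B * B, fun M k => ?_⟩
  rcases le_or_gt k M with hk | hk
  · rw [gaussBinom_eq_div hQ hk, div_eq_mul_inv, mul_inv, norm_mul, norm_mul, ← mul_assoc]
    gcongr
    exacts [hA _ ⟨M, rfl⟩, hB _ ⟨M - k, rfl⟩, hB _ ⟨k, rfl⟩]
  · rw [gaussBinom_of_lt Q hk, norm_zero]
    positivity

lemma tendsto_gaussBinom_two_mul (hQ : ‖Q‖ < 1) (m : ℤ) :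
    Tendsto (fun N : ℕ => gaussBinom Q (2 * N) (m + N).toNat) atTop (𝓝 (eulerPhi Q)⁻¹) := by
  have hP {u : ℕ → ℕ} (hu : ∀ b, ∀ᶠ N in atTop, b ≤ u N) :
      Tendsto (fun N => eulerPartial Q (u N)) atTop (𝓝 (eulerPhi Q)) :=
    (tendsto_eulerPartial hQ).comp (tendsto_atTop.2 hu)
  have hlim := (hP (u := (2 * ·)) fun b => eventually_ge_atTop b |>.mono fun N h => by omega).div
    ((hP (u := fun N => (N - m).toNat) fun b => eventually_ge_atTop (b + m.natAbs) |>.mono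
      fun N h => by omega).mul
    (hP (u := fun N => (m + N).toNat) fun b => eventually_ge_atTop (b + m.natAbs) |>.mono
      fun N h => by omega)) (mul_ne_zero (eulerPhi_ne_zero hQ) (eulerPhi_ne_zero hQ))
  rw [div_mul_cancel_left₀ (eulerPhi_ne_zero hQ)] at hlim
  refine hlim.congr' <| (eventually_ge_atTop m.natAbs).mono fun N hN => ?_
  simp only [Pi.div_apply]
  rw [gaussBinom_eq_div hQ (by omega), show 2 * N - (m + N).toNat = (N - m).toNat by omega]

end Convergence

section TripleProduct

/-- The exponent of `x` in the `m`-th term of Ramanujan's theta function `f(-x^b, -x^c)`. -/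
def thetaExponent (b c : ℕ) (m : ℤ) : ℤ := b * (m * (m + 1) / 2) + c * (m * (m - 1) / 2)

variable {b c : ℕ}

lemma abs_le_thetaExponent (hb : 0 < b) (hc : 0 < c) (m : ℤ) : |m| ≤ thetaExponent b c m := by
  have h₁ := Int.ediv_two_mul_two_of_even (Int.even_mul_succ_self m)
  have h₂ := Int.ediv_two_mul_two_of_even (Int.even_mul_pred_self m)
  have hsq (n : ℤ) : 0 ≤ n * (n + 1) := by
    rcases le_or_gt 0 n with hn | hn
    · positivity
    · nlinarith
  have hb' : (1 : ℤ) ≤ b := by exact_mod_cast hb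
  have hc' : (1 : ℤ) ≤ c := by exact_mod_cast hc
  have hT₁ := hsq m
  have hT₂ := hsq (m - 1)
  unfold thetaExponent
  rcases abs_cases m with ⟨hm, -⟩ | ⟨hm, -⟩ <;> nlinarith

lemma neg_pow_zpow_mul_zpow {K : Type*} [Field K] {x : K} (hx : x ≠ 0) (m : ℤ) :
    (-x ^ b) ^ m * (x ^ (b + c)) ^ (m * (m - 1) / 2) = (-1) ^ m * x ^ thetaExponent b c m := by
  have h : m * (m + 1) / 2 = m * (m - 1) / 2 + m := by
    rw [show m * (m + 1) = m * (m - 1) + m * 2 by ring, Int.add_mul_ediv_right _ _ two_ne_zero]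
  rw [thetaExponent, h, neg_eq_neg_one_mul, mul_zpow, ← zpow_natCast x, ← zpow_natCast x,
    ← zpow_mul, ← zpow_mul, mul_assoc, ← zpow_add₀ hx]
  congr 2
  push_cast
  ring

lemma prod_range_one_sub_pow_mul_one_sub_pow {K : Type*} [Field K] {x : K} (hx : x ≠ 0)
    (N : ℕ) :
    ∏ i ∈ range N, (1 - x ^ ((b + c) * i + b)) * (1 - x ^ ((b + c) * i + c)) =
      ∑ m ∈ Icc (-N : ℤ) N,
        (-1) ^ m * x ^ thetaExponent b c m * gaussBinom (x ^ (b + c)) (2 * N) (m + N).toNat := by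
  have hxb : x ^ b ≠ 0 := pow_ne_zero b hx
  rw [← sum_congr rfl fun m _ => by rw [← neg_pow_zpow_mul_zpow hx m],
    ← prod_range_one_sub_mul_pow_mul_one_sub_pow_div (pow_ne_zero _ hx) hxb]
  refine prod_congr rfl fun i _ => ?_
  have hdiv : (x ^ (b + c)) ^ (i + 1) / x ^ b = x ^ ((b + c) * i + c) := by
    rw [div_eq_iff hxb, ← pow_mul, ← pow_add]
    ring_nf
  rw [hdiv, ← pow_mul, ← pow_add, add_comm b ((b + c) * i)]

lemma tendsto_prod_range_one_sub_pow_mul_one_sub_pow {x : ℂ} (hx : ‖x‖ < 1) (hx₀ : x ≠ 0)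
    (hb : 0 < b) (hc : 0 < c) :
    Tendsto (fun N => ∏ i ∈ range N, (1 - x ^ ((b + c) * i + b)) * (1 - x ^ ((b + c) * i + c)))
      atTop
      (𝓝 ((∑' m : ℤ, (-1) ^ m * x ^ thetaExponent b c m) / eulerPhi (x ^ (b + c)))) := by
  set Q := x ^ (b + c)
  have hQ : ‖Q‖ < 1 := by
    rw [norm_pow]; exact pow_lt_one₀ (norm_nonneg x) hx (by omega)
  set F : ℕ → ℤ → ℂ := fun N => (Icc (-N : ℤ) N : Set ℤ).indicator
    fun m => (-1) ^ m * x ^ thetaExponent b c m * gaussBinom Q (2 * N) (m + N).toNat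
  have hlim (m : ℤ) :
      Tendsto (F · m) atTop (𝓝 ((-1) ^ m * x ^ thetaExponent b c m * (eulerPhi Q)⁻¹)) := by
    refine ((tendsto_gaussBinom_two_mul hQ m).const_mul _).congr' <|
      (eventually_ge_atTop m.natAbs).mono fun N hN => ?_
    simp only [F]
    rw [Set.indicator_of_mem (by simp only [coe_Icc, Set.mem_Icc]; omega)]
  obtain ⟨C, hC⟩ := exists_norm_gaussBinom_le hQ
  have hbound (N : ℕ) (m : ℤ) : ‖F N m‖ ≤ C * ‖x‖ ^ m.natAbs := by
    refine norm_indicator_le_norm_self _ _ |>.trans ?_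
    rw [norm_mul, norm_mul, norm_zpow, norm_zpow, norm_neg, norm_one, one_zpow, one_mul, mul_comm]
    gcongr
    · exact (norm_nonneg _).trans (hC 0 0)
    · exact hC _ _
    · rw [← zpow_natCast, Int.natCast_natAbs]
      exact zpow_le_zpow_right_of_le_one₀ (norm_pos_iff.2 hx₀) hx.le
        (abs_le_thetaExponent hb hc m)
  have hgeom := summable_geometric_of_lt_one (norm_nonneg x) hx
  have htannery := tendsto_tsum_of_dominated_convergence
    ((Summable.of_nat_of_neg (by simpa using hgeom) (by simpa using hgeom)).mul_left C) hlim
    (Eventually.of_forall hbound)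
  rw [tsum_mul_right, ← div_eq_mul_inv] at htannery
  refine htannery.congr fun N => ?_
  rw [prod_range_one_sub_pow_mul_one_sub_pow hx₀, sum_eq_tsum_indicator]

theorem hasProd_jacobiTripleProduct {x : ℂ} (hx : ‖x‖ < 1) (hb : 0 < b) (hc : 0 < c) :
    HasProd (fun n : ℕ =>
        (1 - x ^ ((b + c) * n + b)) * (1 - x ^ ((b + c) * n + c)) * (1 - x ^ ((b + c) * (n + 1))))
      (∑' m : ℤ, (-1) ^ m * x ^ thetaExponent b c m) := by
  have hle (k n : ℕ) : n ≤ (b + c) * n + k :=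
    (Nat.le_mul_of_pos_left n (by omega)).trans (Nat.le_add_right _ k)
  have hmult := ((multipliable_one_sub_pow_comp hx (hle b)).mul
    (multipliable_one_sub_pow_comp hx (hle c))).mul
    (multipliable_one_sub_pow_comp (e := fun n => (b + c) * (n + 1)) hx fun n =>
      n.le_succ.trans (Nat.le_mul_of_pos_left _ (by omega)))
  rw [hmult.hasProd_iff_tendsto_nat]
  rcases eq_or_ne x 0 with rfl | hx₀
  · have hθ (m : ℤ) (hm : m ≠ 0) : thetaExponent b c m ≠ 0 :=
      ((abs_pos.2 hm).trans_le (abs_le_thetaExponent hb hc m)).ne'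
    rw [tsum_eq_single 0 fun m hm => by rw [zero_zpow _ (hθ m hm), mul_zero]]
    simp [thetaExponent, hb.ne', hc.ne']
  have hQ : ‖x ^ (b + c)‖ < 1 := by
    rw [norm_pow]; exact pow_lt_one₀ (norm_nonneg x) hx (by omega)
  have hlim := (tendsto_prod_range_one_sub_pow_mul_one_sub_pow hx hx₀ hb hc).mul
    (tendsto_eulerPartial hQ)
  rw [div_mul_cancel₀ _ (eulerPhi_ne_zero hQ)] at hlim
  refine hlim.congr fun N => ?_
  rw [eulerPartial, ← prod_mul_distrib]
  simp only [← pow_mul]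

end TripleProduct

section RogersRamanujan

variable {y : ℂ}

lemma hasProd_rrB (hy : ‖y‖ < 1) :
    HasProd (fun n => ((1 - y ^ (5 * n + 4)) * (1 - y ^ (5 * n + 1)))⁻¹) (rrB y) := by
  have h₄ := multipliable_one_sub_pow_comp (e := fun n => 5 * n + 4) hy fun n => by omega
  have h₁ := multipliable_one_sub_pow_comp (e := fun n => 5 * n + 1) hy fun n => by omega
  refine ((h₄.mul h₁).inv₀ ?_).hasProd
  rw [h₄.tprod_mul h₁]
  exact mul_ne_zero (tprod_one_sub_pow_comp_ne_zero hy fun n => by omega)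
    (tprod_one_sub_pow_comp_ne_zero hy fun n => by omega)

lemma eulerPhi_mul_rrB (hy : ‖y‖ < 1) :
    eulerPhi y * rrB y = ∑' m : ℤ, (-1) ^ m * y ^ thetaExponent 3 2 m := by
  refine tendsto_nhds_unique (((hasProd_eulerPhi hy).tendsto_prod_range_prod_range
    (d := 5) (by norm_num)).mul (hasProd_rrB hy).tendsto_prod_nat) <|
    (hasProd_jacobiTripleProduct hy (by norm_num) (by norm_num)).tendsto_prod_nat.congr fun N => ?_
  rw [← prod_mul_distrib]
  refine prod_congr rfl fun n _ => ?_
  have h₄ := one_sub_pow_ne_zero hy (k := 5 * n + 4) (by omega)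
  have h₁ := one_sub_pow_ne_zero hy (k := 5 * n + 1) (by omega)
  simp only [prod_range_succ, prod_range_zero]
  field_simp
  ring

lemma three_mul_mul_ediv_two (m : ℤ) : 3 * m * (15 * m + 3) / 2 = 9 * thetaExponent 3 2 m := by
  have h₁ := Int.ediv_two_mul_two_of_even (Int.even_mul_succ_self m)
  have h₂ := Int.ediv_two_mul_two_of_even (Int.even_mul_pred_self m)
  refine Int.ediv_eq_of_eq_mul_right two_ne_zero ?_
  simp only [thetaExponent]
  push_cast
  linear_combination (-27 : ℤ) * h₁ - 18 * h₂

end RogersRamanujan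

theorem aPhi_part_zero_mod_three (q : ℂ) (hq : ‖q‖ < 1) :
    ∑' m : ℤ, (-1 : ℂ) ^ m * q ^ (3 * m * (15 * m + 3) / 2) =
      eulerPhi (q ^ 9) * rrB (q ^ 9) := by
  have hq₉ : ‖q ^ 9‖ < 1 := by
    rw [norm_pow]
    exact pow_lt_one₀ (norm_nonneg q) hq (by norm_num)
  simp_rw [eulerPhi_mul_rrB hq₉, three_mul_mul_ediv_two, zpow_mul, zpow_ofNat]
end

section
/- For every complex number q with |q| < 1, the sum of the terms of ∑_{k∈ℤ}(−1)^k q^{k(5k+1)/2} over those k congruent to 0 or 1 modulo 3 equals G(q³); that is, ∑_{k∈ℤ, k≡0 or 1 (mod 3)}(−1)^k q^{k(5k+1)/2} = G(q³). (Lemma 3.5: the part of b(q)φ(q) supported on exponents ≡ 0 mod 3 equals G(q³).) -/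
open scoped BigOperators

/-!
Write `k = 3 * j` or `k = 1 - 3 * j`. With `y = q ^ 3` the term
`(-1) ^ k * q ^ (k * (5 * k + 1) / 2)` becomes `(-1) ^ j * y ^ (15 * (j * (j - 1) / 2) + 8 * j)`,
resp. `-y * ((-1) ^ j * y ^ (15 * (j * (j - 1) / 2) + 2 * j))`, and the Jacobi triple product with
`x = y ^ 15` and `z = -y ^ 8`, resp. `z = -y ^ 2`, sums these two series to the two products
of `G(y)`.

The triple product identity comes from its finite form
`∏_{n<N} (1 + z x^n) (1 + z⁻¹ x^(n+1)) = ∑_{|j| ≤ N} [2N, N+j]_x z^j x^(j(j-1)/2)`,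
which is the q-binomial theorem at `z x^(-N)`, by letting `N → ∞`: the Gaussian binomials
`[2N, N+j]_x` are bounded and tend to `1 / (x; x)_∞`, so dominated convergence applies.
-/

open Filter Finset Topology

section QBinomial

variable {R : Type*} [CommRing R]

def qPoch (x : R) (M : ℕ) : R := ∏ i ∈ range M, (1 - x ^ (i + 1))

/-- Gaussian binomial coefficients, defined by the q-Pascal rule so that no division is needed. -/
def qBinom (x : R) : ℕ → ℕ → R
  | _, 0 => 1
  | 0, _ + 1 => 0
  | m + 1, k + 1 => qBinom x m k + x ^ (k + 1) * qBinom x m (k + 1)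

@[simp]
lemma qPoch_zero (x : R) : qPoch x 0 = 1 := prod_range_zero _

lemma qPoch_succ (x : R) (M : ℕ) : qPoch x (M + 1) = qPoch x M * (1 - x ^ (M + 1)) :=
  prod_range_succ _ _

@[simp]
lemma qBinom_zero_right (x : R) (m : ℕ) : qBinom x m 0 = 1 := by
  cases m <;> rfl

lemma qBinom_succ_succ (x : R) (m k : ℕ) :
    qBinom x (m + 1) (k + 1) = qBinom x m k + x ^ (k + 1) * qBinom x m (k + 1) := rfl

lemma qBinom_eq_zero_of_lt (x : R) {m k : ℕ} (h : m < k) : qBinom x m k = 0 := by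
  induction m generalizing k with
  | zero =>
    obtain ⟨k, rfl⟩ := Nat.exists_eq_add_one_of_ne_zero (by omega : k ≠ 0)
    rfl
  | succ m ih =>
    obtain ⟨k, rfl⟩ := Nat.exists_eq_add_one_of_ne_zero (by omega : k ≠ 0)
    rw [qBinom_succ_succ, ih (by omega), ih (by omega), mul_zero, add_zero]

lemma qBinom_mul_qPoch_mul_qPoch (x : R) {m k : ℕ} (h : k ≤ m) :
    qBinom x m k * qPoch x k * qPoch x (m - k) = qPoch x m := by
  induction m generalizing k with
  | zero =>
    obtain rfl : k = 0 := by omega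
    simp
  | succ m ih =>
    rcases k with _ | k
    · simp
    rcases (show k = m ∨ k < m by omega) with rfl | hk
    · have h1 := ih (le_refl k)
      rw [Nat.sub_self, qPoch_zero, mul_one] at h1
      rw [qBinom_succ_succ, qBinom_eq_zero_of_lt x (Nat.lt_succ_self k), Nat.sub_self, qPoch_succ,
        qPoch_zero]
      linear_combination (1 - x ^ (k + 1)) * h1
    · obtain ⟨d, rfl⟩ : ∃ d, m = k + 1 + d := ⟨m - (k + 1), by omega⟩
      have h1 := ih (k := k) (by omega)
      have h2 := ih (k := k + 1) (by omega)
      rw [show k + 1 + d - k = d + 1 by omega, qPoch_succ x d] at h1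
      rw [show k + 1 + d - (k + 1) = d by omega, qPoch_succ x k] at h2
      rw [show k + 1 + d + 1 - (k + 1) = d + 1 by omega, qBinom_succ_succ, qPoch_succ x k,
        qPoch_succ x d, qPoch_succ x (k + 1 + d)]
      linear_combination (1 - x ^ (k + 1)) * h1 + x ^ (k + 1) * (1 - x ^ (d + 1)) * h2

/-- The Gaussian binomial `[2N, N + j]_x`, extended by zero to `j < -N`. -/
def qBinomCentral (x : R) (N : ℕ) (j : ℤ) : R :=
  if -(N : ℤ) ≤ j then qBinom x (2 * N) (j + N).toNat else 0

/-- **q-binomial theorem.** -/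
theorem prod_one_add_mul_pow_eq_sum_qBinom (x w : R) (m : ℕ) :
    ∏ i ∈ range m, (1 + w * x ^ i) =
      ∑ k ∈ range (m + 1), qBinom x m k * x ^ k.choose 2 * w ^ k := by
  induction m generalizing w with
  | zero => simp
  | succ m ih =>
    have hprod : ∏ i ∈ range (m + 1), (1 + w * x ^ i) =
        (1 + w) * ∏ i ∈ range m, (1 + w * x * x ^ i) := by
      rw [prod_range_succ', mul_comm]
      simp [pow_succ', mul_assoc]
    have hlow : ∑ k ∈ range m, qBinom x m (k + 1) * x ^ (k + 1).choose 2 * (w * x) ^ (k + 1) =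
        ∑ k ∈ range (m + 1),
          x ^ (k + 1) * qBinom x m (k + 1) * x ^ (k + 1).choose 2 * w ^ (k + 1) := by
      rw [sum_range_succ, qBinom_eq_zero_of_lt x (Nat.lt_succ_self m)]
      simp only [mul_zero, zero_mul, add_zero, mul_pow]
      exact sum_congr rfl fun k _ => by ring
    have hhigh : ∑ k ∈ range (m + 1), w * (qBinom x m k * x ^ k.choose 2 * (w * x) ^ k) =
        ∑ k ∈ range (m + 1), qBinom x m k * x ^ (k + 1).choose 2 * w ^ (k + 1) :=
      sum_congr rfl fun k _ => by rw [Nat.choose_succ_succ', Nat.choose_one_right]; ring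
    rw [hprod, ih, sum_range_succ' _ (m + 1), add_mul, one_mul, mul_sum,
      sum_range_succ' (fun k => qBinom x m k * x ^ k.choose 2 * (w * x) ^ k), hlow, hhigh]
    simp only [qBinom_succ_succ, add_mul, sum_add_distrib, qBinom_zero_right, Nat.choose_zero_succ,
      pow_zero, mul_one]
    ring

end QBinomial

lemma mul_pred_ediv_two_add (j m : ℤ) :
    (j + m) * (j + m - 1) / 2 = m * (m - 1) / 2 + (j * (j - 1) / 2 + m * j) := by
  have hj := Int.even_iff.1 (Int.even_mul_pred_self j)
  have hm := Int.even_iff.1 (Int.even_mul_pred_self m)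
  rw [show (j + m) * (j + m - 1) = j * (j - 1) + m * (m - 1) + 2 * (m * j) by ring]
  omega

section JacobiTerm

variable {K : Type*} [Field K] {x z : K}

/-- The integer division is exact: `j * (j - 1)` is even. -/
def jacobiTerm (x z : K) (j : ℤ) : K := z ^ j * x ^ (j * (j - 1) / 2)

@[simp]
lemma jacobiTerm_zero (x z : K) : jacobiTerm x z 0 = 1 := by simp [jacobiTerm]

lemma jacobiTerm_natCast (x z : K) (k : ℕ) : jacobiTerm x z k = z ^ k * x ^ k.choose 2 := by
  have h : ((k.choose 2 : ℕ) : ℤ) = (k : ℤ) * ((k : ℤ) - 1) / 2 := by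
    rw [Nat.choose_two_right, Int.natCast_ediv]
    rcases k with _ | k
    · rfl
    · push_cast; ring_nf
  rw [jacobiTerm, zpow_natCast, ← h, zpow_natCast]

lemma jacobiTerm_add (hx : x ≠ 0) (hz : z ≠ 0) (j m : ℤ) :
    jacobiTerm x z (j + m) = jacobiTerm x z m * jacobiTerm x (z * x ^ m) j := by
  simp only [jacobiTerm, mul_pred_ediv_two_add, mul_zpow, ← zpow_mul, zpow_add₀ hx, zpow_add₀ hz]
  ring

lemma jacobiTerm_add_one (hx : x ≠ 0) (hz : z ≠ 0) (j : ℤ) :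
    jacobiTerm x z (j + 1) = z * x ^ j * jacobiTerm x z j := by
  rw [add_comm, jacobiTerm_add hx hz, jacobiTerm, jacobiTerm]
  simp only [zpow_one, sub_self, mul_zero, EuclideanDomain.zero_div, zpow_zero, mul_one]
  ring

lemma jacobiTerm_neg (hx : x ≠ 0) (j : ℤ) : jacobiTerm x z (-j) = jacobiTerm x (x / z) j := by
  have h : -j * (-j - 1) / 2 = j * (j - 1) / 2 + j := by
    rw [show -j * (-j - 1) = (j + 1) * (j + 1 - 1) by ring, mul_pred_ediv_two_add]
    simp
  rw [jacobiTerm, jacobiTerm, h, zpow_add₀ hx, div_zpow, zpow_neg]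
  ring

lemma jacobiTerm_neg_natCast_mul_prod (hx : x ≠ 0) (hz : z ≠ 0) (N : ℕ) :
    jacobiTerm x z (-N) * ∏ n ∈ range N, z / x ^ (n + 1) = 1 := by
  induction N with
  | zero => simp
  | succ N ih =>
    have h := jacobiTerm_add_one hx hz (-(N + 1 : ℕ))
    rw [show -((N + 1 : ℕ) : ℤ) + 1 = -N by push_cast; ring, zpow_neg, zpow_natCast] at h
    rw [prod_range_succ, ← ih, h]
    field_simp

theorem prod_range_eq_sum_qBinom_mul_jacobiTerm (hx : x ≠ 0) (hz : z ≠ 0) (N : ℕ) :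
    ∏ n ∈ range N, ((1 + z * x ^ n) * (1 + z⁻¹ * x ^ (n + 1))) =
      ∑ k ∈ range (2 * N + 1), qBinom x (2 * N) k * jacobiTerm x z (k - N) := by
  have hsplit : ∏ i ∈ range (2 * N), (1 + z / x ^ N * x ^ i) =
      (∏ n ∈ range N, z / x ^ (n + 1)) *
        ∏ n ∈ range N, ((1 + z * x ^ n) * (1 + z⁻¹ * x ^ (n + 1))) := by
    rw [two_mul, prod_range_add, ← prod_range_reflect _ N, ← prod_mul_distrib, ← prod_mul_distrib]
    refine prod_congr rfl fun n hn => ?_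
    have hxN : x ^ (N - 1 - n) * x ^ (n + 1) = x ^ N := by
      rw [← pow_add]; congr 1; have := mem_range.1 hn; omega
    rw [pow_add x N n, ← hxN]
    field_simp
    ring
  have hterm : ∀ k : ℕ, jacobiTerm x z (-N) * (x ^ k.choose 2 * (z / x ^ N) ^ k) =
      jacobiTerm x z (k - N) := by
    intro k
    rw [sub_eq_add_neg, jacobiTerm_add hx hz, zpow_neg, zpow_natCast, ← div_eq_mul_inv,
      jacobiTerm_natCast]
    ring
  calc _ = jacobiTerm x z (-N) * ∏ i ∈ range (2 * N), (1 + z / x ^ N * x ^ i) := by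
        rw [hsplit, ← mul_assoc, jacobiTerm_neg_natCast_mul_prod hx hz, one_mul]
    _ = _ := by
        rw [prod_one_add_mul_pow_eq_sum_qBinom, mul_sum]
        refine sum_congr rfl fun k _ => ?_
        rw [← hterm]
        ring

theorem hasSum_qBinomCentral_mul_jacobiTerm [TopologicalSpace K] (hx : x ≠ 0) (hz : z ≠ 0) (N : ℕ) :
    HasSum (fun j => qBinomCentral x N j * jacobiTerm x z j)
      (∏ n ∈ range N, ((1 + z * x ^ n) * (1 + z⁻¹ * x ^ (n + 1)))) := by
  have hshift : Function.Injective fun k : ℕ => (k : ℤ) - N := fun a b h => by simpa using h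
  refine (hshift.hasSum_iff fun j hj => ?_).1 ?_
  · have hjN : j < -N := by
      by_contra! h
      exact hj ⟨(j + N).toNat, by simp only; omega⟩
    simp [qBinomCentral, hjN.not_ge]
  · rw [prod_range_eq_sum_qBinom_mul_jacobiTerm hx hz]
    have hcomp : (fun j => qBinomCentral x N j * jacobiTerm x z j) ∘ (fun k : ℕ => (k : ℤ) - N) =
        fun k => qBinom x (2 * N) k * jacobiTerm x z (k - N) := by
      funext k
      simp [qBinomCentral]
    rw [hcomp]
    exact hasSum_sum_of_ne_finset_zero fun k hk => by
      simp [qBinom_eq_zero_of_lt x (by simpa using hk : 2 * N < k)]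

end JacobiTerm

section JacobiTripleProduct

variable {𝕜 : Type*} [NormedField 𝕜] {x z : 𝕜}

lemma one_sub_pow_succ_ne_zero (hx : ‖x‖ < 1) (n : ℕ) : 1 - x ^ (n + 1) ≠ 0 := by
  refine sub_ne_zero.2 fun h => ?_
  have := congrArg norm h
  rw [norm_one, norm_pow] at this
  exact (pow_lt_one₀ (norm_nonneg x) hx n.succ_ne_zero).ne' this

lemma qPoch_ne_zero (hx : ‖x‖ < 1) (M : ℕ) : qPoch x M ≠ 0 :=
  prod_ne_zero_iff.2 fun n _ => one_sub_pow_succ_ne_zero hx n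

lemma qBinom_eq_div (hx : ‖x‖ < 1) {m k : ℕ} (h : k ≤ m) :
    qBinom x m k = qPoch x m / (qPoch x k * qPoch x (m - k)) := by
  rw [eq_div_iff (mul_ne_zero (qPoch_ne_zero hx k) (qPoch_ne_zero hx _)), ← mul_assoc,
    qBinom_mul_qPoch_mul_qPoch x h]

lemma summable_norm_jacobiTerm_natCast (hx : ‖x‖ < 1) (hx0 : x ≠ 0) (hz : z ≠ 0) :
    Summable fun n : ℕ => ‖jacobiTerm x z n‖ := by
  refine summable_of_ratio_norm_eventually_le (r := 1 / 2) (by norm_num) ?_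
  have hratio : Tendsto (fun n : ℕ => ‖z‖ * ‖x‖ ^ n) atTop (𝓝 0) := by
    simpa using (tendsto_pow_atTop_nhds_zero_of_lt_one (norm_nonneg x) hx).const_mul ‖z‖
  filter_upwards [hratio.eventually_le_const (by norm_num : (0 : ℝ) < 1 / 2)] with n hn
  rw [norm_norm, norm_norm, Nat.cast_succ, jacobiTerm_add_one hx0 hz, norm_mul, norm_mul,
    zpow_natCast, norm_pow]
  exact mul_le_mul_of_nonneg_right hn (norm_nonneg _)

lemma summable_norm_jacobiTerm (hx : ‖x‖ < 1) (hx0 : x ≠ 0) (hz : z ≠ 0) :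
    Summable fun j : ℤ => ‖jacobiTerm x z j‖ :=
  .of_nat_of_neg (summable_norm_jacobiTerm_natCast hx hx0 hz) <| by
    simpa only [jacobiTerm_neg hx0] using
      summable_norm_jacobiTerm_natCast hx hx0 (div_ne_zero hx0 hz)

variable [CompleteSpace 𝕜]

lemma multipliable_one_add_mul_pow (a : 𝕜) (hx : ‖x‖ < 1) :
    Multipliable fun n : ℕ => 1 + a * x ^ n :=
  multipliable_one_add_of_summable <| by
    simpa [norm_pow] using (summable_geometric_of_lt_one (norm_nonneg x) hx).mul_left ‖a‖

lemma multipliable_one_sub_pow_succ (hx : ‖x‖ < 1) :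
    Multipliable fun n : ℕ => 1 - x ^ (n + 1) := by
  simpa [pow_succ', sub_eq_add_neg] using multipliable_one_add_mul_pow (-x) hx

lemma tprod_one_sub_pow_succ_ne_zero (hx : ‖x‖ < 1) : ∏' n : ℕ, (1 - x ^ (n + 1)) ≠ 0 := by
  have hsum : Summable fun n : ℕ => ‖-x ^ (n + 1)‖ := by
    simpa [norm_pow] using
      (summable_nat_add_iff 1).2 (summable_geometric_of_lt_one (norm_nonneg x) hx)
  simpa [sub_eq_add_neg] using tprod_one_add_ne_zero_of_summable
    (fun n => by simpa [sub_eq_add_neg] using one_sub_pow_succ_ne_zero hx n) hsum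

lemma tendsto_qPoch (hx : ‖x‖ < 1) :
    Tendsto (qPoch x) atTop (𝓝 (∏' n : ℕ, (1 - x ^ (n + 1)))) :=
  (multipliable_one_sub_pow_succ hx).hasProd.tendsto_prod_nat

lemma exists_norm_qBinom_le (hx : ‖x‖ < 1) : ∃ C, ∀ m k, ‖qBinom x m k‖ ≤ C := by
  obtain ⟨A, hA⟩ := isBounded_iff_forall_norm_le.1
    (Metric.isBounded_range_of_tendsto _ (tendsto_qPoch hx))
  obtain ⟨B, hB⟩ := isBounded_iff_forall_norm_le.1 (Metric.isBounded_range_of_tendsto _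
    ((tendsto_qPoch hx).inv₀ (tprod_one_sub_pow_succ_ne_zero hx)))
  have hA0 : 0 ≤ A := (norm_nonneg _).trans (hA _ ⟨0, rfl⟩)
  have hB0 : 0 ≤ B := (norm_nonneg _).trans (hB _ ⟨0, rfl⟩)
  refine ⟨A * B * B, fun m k => ?_⟩
  rcases le_or_gt k m with h | h
  · rw [qBinom_eq_div hx h, div_eq_mul_inv, mul_inv, ← mul_assoc, norm_mul, norm_mul]
    gcongr
    exacts [hA _ ⟨m, rfl⟩, hB _ ⟨k, rfl⟩, hB _ ⟨m - k, rfl⟩]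
  · rw [qBinom_eq_zero_of_lt x h, norm_zero]
    positivity

lemma exists_norm_qBinomCentral_le (hx : ‖x‖ < 1) : ∃ C, ∀ N j, ‖qBinomCentral x N j‖ ≤ C := by
  obtain ⟨C, hC⟩ := exists_norm_qBinom_le hx
  refine ⟨C, fun N j => ?_⟩
  unfold qBinomCentral
  split_ifs
  · exact hC _ _
  · simpa using (norm_nonneg _).trans (hC 0 0)

lemma tendsto_qBinomCentral (hx : ‖x‖ < 1) (j : ℤ) :
    Tendsto (fun N => qBinomCentral x N j) atTop (𝓝 (∏' n : ℕ, (1 - x ^ (n + 1)))⁻¹) := by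
  set D := ∏' n : ℕ, (1 - x ^ (n + 1))
  have hD := tprod_one_sub_pow_succ_ne_zero hx
  have h2N : Tendsto (fun N : ℕ => 2 * N) atTop atTop :=
    tendsto_atTop_atTop.2 fun b => ⟨b, fun N hN => by omega⟩
  have hjN : Tendsto (fun N : ℕ => (j + N).toNat) atTop atTop :=
    tendsto_atTop_atTop.2 fun b => ⟨b + j.natAbs, fun N hN => by omega⟩
  have hNj : Tendsto (fun N : ℕ => (N - j).toNat) atTop atTop :=
    tendsto_atTop_atTop.2 fun b => ⟨b + j.natAbs, fun N hN => by omega⟩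
  have hlim := ((tendsto_qPoch hx).comp h2N).div
    (((tendsto_qPoch hx).comp hjN).mul ((tendsto_qPoch hx).comp hNj)) (mul_ne_zero hD hD)
  rw [div_mul_cancel_left₀ hD] at hlim
  refine hlim.congr' ?_
  filter_upwards [eventually_ge_atTop j.natAbs] with N hN
  rw [qBinomCentral, if_pos (by omega), qBinom_eq_div hx (by omega),
    show 2 * N - (j + N).toNat = (N - j).toNat by omega]
  rfl

/-- **Jacobi triple product.** -/
theorem hasSum_jacobiTerm (hx : ‖x‖ < 1) (hx0 : x ≠ 0) (hz : z ≠ 0) :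
    HasSum (jacobiTerm x z)
      (∏' n : ℕ, (1 - x ^ (n + 1)) * (1 + z * x ^ n) * (1 + z⁻¹ * x ^ (n + 1))) := by
  set D := ∏' n : ℕ, (1 - x ^ (n + 1))
  have hP : Multipliable fun n : ℕ => (1 + z * x ^ n) * (1 + z⁻¹ * x ^ (n + 1)) := by
    refine (multipliable_one_add_mul_pow z hx).mul ?_
    simpa [pow_succ', mul_assoc] using multipliable_one_add_mul_pow (z⁻¹ * x) hx
  obtain ⟨C, hC⟩ := exists_norm_qBinomCentral_le hx
  have hsum := summable_norm_jacobiTerm hx hx0 hz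
  have hlim : Tendsto (fun N => ∑' j, qBinomCentral x N j * jacobiTerm x z j) atTop
      (𝓝 (∑' j, D⁻¹ * jacobiTerm x z j)) :=
    tendsto_tsum_of_dominated_convergence (hsum.mul_left C)
      (fun j => (tendsto_qBinomCentral hx j).mul_const _)
      (.of_forall fun N j => by rw [norm_mul]; gcongr; exact hC N j)
  simp_rw [(hasSum_qBinomCentral_mul_jacobiTerm hx0 hz _).tsum_eq, tsum_mul_left] at hlim
  have hD : ∑' j, jacobiTerm x z j = D * ∏' n : ℕ, (1 + z * x ^ n) * (1 + z⁻¹ * x ^ (n + 1)) :=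
    (inv_mul_eq_iff_eq_mul₀ (tprod_one_sub_pow_succ_ne_zero hx)).1
      (tendsto_nhds_unique hlim hP.hasProd.tendsto_prod_nat)
  simp_rw [mul_assoc]
  rw [(multipliable_one_sub_pow_succ hx).tprod_mul hP, ← hD]
  exact hsum.of_norm.hasSum

end JacobiTripleProduct

theorem hasSum_neg_one_zpow_mul_zpow {𝕜 : Type*} [NormedField 𝕜] [CompleteSpace 𝕜] {y : 𝕜}
    (hy : ‖y‖ < 1) (hy0 : y ≠ 0) {m b c : ℕ} (hm : 0 < m) (hbc : b + c = m) :
    HasSum (fun j : ℤ => (-1) ^ j * y ^ (m * (j * (j - 1) / 2) + b * j))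
      (∏' n : ℕ, (1 - y ^ (m * n + m)) * (1 - y ^ (m * n + b)) * (1 - y ^ (m * n + c))) := by
  have hx : ‖y ^ m‖ < 1 := by
    rw [norm_pow]
    exact pow_lt_one₀ (norm_nonneg y) hy hm.ne'
  convert hasSum_jacobiTerm hx (pow_ne_zero m hy0) (neg_ne_zero.2 (pow_ne_zero b hy0)) using 1
  · funext j
    have hz : (-(y ^ b)) ^ j = (-1) ^ j * y ^ ((b : ℤ) * j) := by
      rw [neg_eq_neg_one_mul, mul_zpow, ← zpow_natCast y b, ← zpow_mul]
    rw [jacobiTerm, hz, ← zpow_natCast y m, ← zpow_mul, zpow_add₀ hy0]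
    ring
  · refine tprod_congr fun n => ?_
    have e1 : (y ^ m) ^ (n + 1) = y ^ (m * n + m) := by rw [← pow_mul, mul_add, mul_one]
    have e2 : -(y ^ b) * (y ^ m) ^ n = -y ^ (m * n + b) := by
      rw [neg_mul, ← pow_mul, ← pow_add, add_comm]
    have e3 : (-(y ^ b))⁻¹ * (y ^ m) ^ (n + 1) = -y ^ (m * n + c) := by
      rw [e1, show m * n + m = b + (m * n + c) by omega, pow_add, inv_neg, neg_mul,
        inv_mul_cancel_left₀ (pow_ne_zero b hy0)]
    rw [e3, e1, e2]
    ring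

lemma neg_one_zpow_mul_zpow_three_mul (q : ℂ) (j : ℤ) :
    (-1 : ℂ) ^ (3 * j) * q ^ (3 * j * (5 * (3 * j) + 1) / 2) =
      (-1) ^ j * (q ^ 3) ^ (15 * (j * (j - 1) / 2) + 8 * j) := by
  have hj := Int.even_iff.1 (Int.even_mul_pred_self j)
  have hsign : (-1 : ℂ) ^ (3 * j) = (-1) ^ j := by rw [zpow_mul]; norm_num
  have hexp : 3 * j * (5 * (3 * j) + 1) / 2 = 3 * (15 * (j * (j - 1) / 2) + 8 * j) := by
    rw [show 3 * j * (5 * (3 * j) + 1) = 45 * (j * (j - 1)) + 48 * j by ring]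
    omega
  rw [hsign, hexp, zpow_mul, zpow_ofNat]

lemma neg_one_zpow_mul_zpow_one_sub_three_mul {q : ℂ} (hq0 : q ≠ 0) (j : ℤ) :
    (-1 : ℂ) ^ (1 - 3 * j) * q ^ ((1 - 3 * j) * (5 * (1 - 3 * j) + 1) / 2) =
      -q ^ 3 * ((-1) ^ j * (q ^ 3) ^ (15 * (j * (j - 1) / 2) + 2 * j)) := by
  have hj := Int.even_iff.1 (Int.even_mul_pred_self j)
  have hsign : (-1 : ℂ) ^ (1 - 3 * j) = -(-1) ^ j := by
    rw [show 1 - 3 * j = j + 1 + 2 * (-2 * j) by ring, zpow_add₀ (by norm_num), zpow_mul,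
      zpow_add_one₀ (by norm_num)]
    norm_num
  have hexp : (1 - 3 * j) * (5 * (1 - 3 * j) + 1) / 2 =
      3 + 3 * (15 * (j * (j - 1) / 2) + 2 * j) := by
    rw [show (1 - 3 * j) * (5 * (1 - 3 * j) + 1) = 45 * (j * (j - 1)) + 12 * j + 6 by ring]
    omega
  rw [hsign, hexp, zpow_add₀ (by simpa using hq0), zpow_mul, zpow_ofNat]
  ring

lemma setOf_emod_three_eq_range_union :
    {n : ℤ | n % 3 = 0 ∨ n % 3 = 1} = Set.range (3 * ·) ∪ Set.range (1 - 3 * ·) := by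
  ext n
  simp only [Set.mem_ofPred_eq, Set.mem_union, Set.mem_range]
  constructor
  · rintro (h | h)
    exacts [.inl ⟨n / 3, by omega⟩, .inr ⟨(1 - n) / 3, by omega⟩]
  · rintro (⟨j, rfl⟩ | ⟨j, rfl⟩) <;> omega

lemma hasSum_subtype_mod_three_of_ne_zero {q : ℂ} (hq : ‖q‖ < 1) (hq0 : q ≠ 0) :
    HasSum (fun k : {n : ℤ // n % 3 = 0 ∨ n % 3 = 1} =>
      (-1 : ℂ) ^ (k : ℤ) * q ^ ((k : ℤ) * (5 * (k : ℤ) + 1) / 2)) (Gf (q ^ 3)) := by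
  set f : ℤ → ℂ := fun k => (-1) ^ k * q ^ (k * (5 * k + 1) / 2)
  have hy : ‖q ^ 3‖ < 1 := by rw [norm_pow]; exact pow_lt_one₀ (norm_nonneg q) hq (by norm_num)
  have hy0 : q ^ 3 ≠ 0 := pow_ne_zero 3 hq0
  have h0 := hasSum_neg_one_zpow_mul_zpow hy hy0 (m := 15) (b := 8) (c := 7) (by norm_num) rfl
  have h1 := (hasSum_neg_one_zpow_mul_zpow hy hy0 (m := 15) (b := 2) (c := 13) (by norm_num)
    rfl).mul_left (-q ^ 3)
  push_cast at h0 h1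
  rw [← show f ∘ (3 * ·) = _ from funext (neg_one_zpow_mul_zpow_three_mul q)] at h0
  rw [← show f ∘ (1 - 3 * ·) = _ from funext (neg_one_zpow_mul_zpow_one_sub_three_mul hq0)] at h1
  have hdisj : Disjoint (Set.range (3 * · : ℤ → ℤ)) (Set.range (1 - 3 * ·)) :=
    Set.disjoint_left.2 fun _ ⟨i, hi⟩ ⟨j, hj⟩ => by simp only at hi hj; omega
  have hinj0 : Function.Injective (3 * · : ℤ → ℤ) := fun a b h => by simp only at h; omega
  have hinj1 : Function.Injective (1 - 3 * · : ℤ → ℤ) := fun a b h => by simp only at h; omega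
  have h := HasSum.add_disjoint hdisj (hinj0.hasSum_range_iff.2 h0) (hinj1.hasSum_range_iff.2 h1)
  rw [← setOf_emod_three_eq_range_union] at h
  have h' : HasSum (fun k : {n : ℤ // n % 3 = 0 ∨ n % 3 = 1} => f k) _ := h
  convert h' using 1
  unfold Gf
  ring

lemma hasSum_subtype_mod_three_zero :
    HasSum (fun k : {n : ℤ // n % 3 = 0 ∨ n % 3 = 1} =>
      (-1 : ℂ) ^ (k : ℤ) * (0 : ℂ) ^ ((k : ℤ) * (5 * (k : ℤ) + 1) / 2)) (Gf (0 ^ 3)) := by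
  have hG : Gf (0 ^ 3) = 1 := by simp [Gf]
  rw [hG]
  convert hasSum_single (⟨0, .inl rfl⟩ : {n : ℤ // n % 3 = 0 ∨ n % 3 = 1}) fun k hk => ?_
  · simp
  · have hk0 : (k : ℤ) ≠ 0 := fun h => hk (Subtype.ext h)
    have hpos : 4 ≤ (k : ℤ) * (5 * k + 1) := by
      rcases hk0.lt_or_gt with h | h <;> nlinarith
    rw [zero_zpow _ (by omega), mul_zero]

theorem bPhi_part_zero_or_one_mod_three (q : ℂ) (hq : ‖q‖ < 1) :
    ∑' k : {n : ℤ // n % 3 = 0 ∨ n % 3 = 1},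
        (-1 : ℂ) ^ (k : ℤ) * q ^ ((k : ℤ) * (5 * (k : ℤ) + 1) / 2) =
      Gf (q ^ 3) := by
  rcases eq_or_ne q 0 with rfl | hq0
  · exact hasSum_subtype_mod_three_zero.tsum_eq
  · exact (hasSum_subtype_mod_three_of_ne_zero hq hq0).tsum_eq
end

section
/- For every complex number q with |q| < 1, the sum of the terms of ∑_{k∈ℤ}(−1)^k q^{k(5k+1)/2} over those k congruent to 2 modulo 3 equals −q²·φ(q⁹)·a(q⁹); that is, ∑_{k∈ℤ, k≡2 (mod 3)}(−1)^k q^{k(5k+1)/2} = −q²·φ(q⁹)·a(q⁹). (Lemma 3.6: the part of b(q)φ(q) supported on exponents ≡ 2 mod 3 equals −q²a(q⁹)φ(q⁹).) -/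
open scoped BigOperators

/-!
Put `w = q^9` and `k = -3n - 1`, which runs through the class `2 mod 3` as `n` runs through `ℤ`.
Then `(-1)^k = -(-1)^(n^2)` and `k(5k+1)/2 = 2 + 9 (4 T(n) + T(-n))` with `T(n) = n(n+1)/2`, so
the sum is `-q^2` times the series of Jacobi's triple product
`∑ₙ a^T(n) b^T(-n) = ∏ₘ (1 - (ab)^(m+1)) (1 + a (ab)^m) (1 + b (ab)^m)` at `a = -w^4`, `b = -w`.
Its product side `∏ₘ (1 - w^(5m+5)) (1 - w^(5m+4)) (1 - w^(5m+1))` is `φ(w) a(w)`.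

Jacobi's identity is the limit of its finite form
`∏_{j<N} (1 + a (ab)^j) (1 + b (ab)^j) = ∑_{|n| ≤ N} [2N, N+n]_Q a^T(n) b^T(-n)`, `Q = ab`,
which follows from the two `Q`-Pascal rules. Multiplied by `(Q; Q)_N`, the coefficients become
`(Q; Q)_N (Q; Q)_{2N} / ((Q; Q)_{N+n} (Q; Q)_{N-n})`; these tend to `1` and stay bounded because
`(Q; Q)_m` converges to `(Q; Q)_∞ ≠ 0`, so dominated convergence applies.
-/

open Filter Topology Finset

namespace QSeries

section CommRing

variable {R : Type*} [CommRing R]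

/-- The Gaussian binomial coefficient `[m, k]_Q`. -/
def qBinom (Q : R) : ℕ → ℕ → R
  | _, 0 => 1
  | 0, _ + 1 => 0
  | m + 1, k + 1 => qBinom Q m k + Q ^ (k + 1) * qBinom Q m (k + 1)

@[simp] lemma qBinom_zero_right (Q : R) (m : ℕ) : qBinom Q m 0 = 1 := by
  cases m <;> rfl

lemma qBinom_succ_succ (Q : R) (m k : ℕ) :
    qBinom Q (m + 1) (k + 1) = qBinom Q m k + Q ^ (k + 1) * qBinom Q m (k + 1) := rfl

lemma qBinom_eq_zero_of_lt (Q : R) {m k : ℕ} (h : m < k) : qBinom Q m k = 0 := by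
  induction m generalizing k with
  | zero => obtain ⟨k, rfl⟩ := Nat.exists_eq_add_of_lt h; rfl
  | succ m ih =>
    obtain ⟨k, rfl⟩ := Nat.exists_eq_add_of_lt (Nat.zero_lt_of_lt h)
    rw [qBinom_succ_succ, ih (by omega), ih (by omega), mul_zero, add_zero]

@[simp] lemma qBinom_self (Q : R) (m : ℕ) : qBinom Q m m = 1 := by
  induction m with
  | zero => rfl
  | succ m ih =>
    rw [qBinom_succ_succ, ih, qBinom_eq_zero_of_lt Q m.lt_succ_self, mul_zero, add_zero]

lemma qBinom_succ_succ' (Q : R) {m k : ℕ} (h : k ≤ m) :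
    qBinom Q (m + 1) (k + 1) = Q ^ (m - k) * qBinom Q m k + qBinom Q m (k + 1) := by
  induction m generalizing k with
  | zero =>
    obtain rfl : k = 0 := by omega
    simp [qBinom_eq_zero_of_lt Q zero_lt_one]
  | succ m ih =>
    rcases k with _ | k
    · have h1 := ih (Nat.zero_le m)
      simp only [qBinom_succ_succ, qBinom_zero_right, Nat.sub_zero, zero_add, pow_one] at h1 ⊢
      linear_combination Q * h1
    · rcases Nat.lt_or_eq_of_le h with h | h
      · have hexp : Q ^ (k + 2) * Q ^ (m - (k + 1)) = Q ^ (m - k) * Q ^ (k + 1) := by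
          rw [← pow_add, ← pow_add]; congr 1; omega
        rw [Nat.add_sub_add_right]
        linear_combination qBinom_succ_succ Q (m + 1) (k + 1) + ih (k := k) (by omega)
          - Q ^ (m - k) * qBinom_succ_succ Q m k + Q ^ (k + 2) * ih (k := k + 1) (by omega)
          - qBinom_succ_succ Q m (k + 1) + qBinom Q m (k + 1) * hexp
      · obtain rfl : k = m := by omega
        simp [qBinom_eq_zero_of_lt Q (Nat.lt_succ_self _)]

/-- The `Q`-Pochhammer symbol `(Q; Q)_m`. -/
def qPoch (Q : R) (m : ℕ) : R := ∏ j ∈ range m, (1 - Q ^ (j + 1))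

@[simp] lemma qPoch_zero (Q : R) : qPoch Q 0 = 1 := prod_range_zero _

lemma qPoch_succ (Q : R) (m : ℕ) : qPoch Q (m + 1) = qPoch Q m * (1 - Q ^ (m + 1)) :=
  prod_range_succ _ _

lemma qBinom_mul_qPoch_mul_qPoch (Q : R) {m k : ℕ} (h : k ≤ m) :
    qBinom Q m k * qPoch Q k * qPoch Q (m - k) = qPoch Q m := by
  induction m generalizing k with
  | zero =>
    obtain rfl : k = 0 := by omega
    simp
  | succ m ih =>
    rcases k with _ | k
    · simp
    rw [qBinom_succ_succ, Nat.add_sub_add_right, qPoch_succ Q m, add_mul, add_mul]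
    rcases Nat.lt_or_eq_of_le h with h | h
    · have hsplit : qPoch Q (m - k) = qPoch Q (m - (k + 1)) * (1 - Q ^ (m - k)) := by
        obtain ⟨d, hd⟩ : ∃ d, m - k = d + 1 := ⟨m - (k + 1), by omega⟩
        rw [hd, qPoch_succ, show m - (k + 1) = d by omega]
      have hexp : Q ^ (k + 1) * Q ^ (m - k) = Q ^ (m + 1) := by
        rw [← pow_add]; congr 1; omega
      have h0 : qBinom Q m k * qPoch Q (k + 1) * qPoch Q (m - k) =
          qPoch Q m * (1 - Q ^ (k + 1)) := by
        rw [qPoch_succ, ← ih (k := k) (by omega)]; ring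
      have h1 : Q ^ (k + 1) * qBinom Q m (k + 1) * qPoch Q (k + 1) * qPoch Q (m - k) =
          qPoch Q m * (Q ^ (k + 1) * (1 - Q ^ (m - k))) := by
        rw [hsplit, ← ih (k := k + 1) (by omega)]; ring
      rw [h0, h1]
      linear_combination (-qPoch Q m) * hexp
    · obtain rfl : k = m := by omega
      simp [qBinom_eq_zero_of_lt Q (Nat.lt_succ_self _), qPoch_succ]

def triangle (n : ℤ) : ℕ := (n * (n + 1) / 2).toNat

lemma two_mul_triangle (n : ℤ) : 2 * (triangle n : ℤ) = n * (n + 1) := by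
  have h0 : 0 ≤ n * (n + 1) := by nlinarith [sq_nonneg (2 * n + 1)]
  rw [triangle, Int.toNat_of_nonneg (Int.ediv_nonneg h0 zero_le_two),
    Int.mul_ediv_cancel' (Int.even_mul_succ_self n).two_dvd]

lemma triangle_succ (n : ℤ) : (triangle (n + 1) : ℤ) = triangle n + n + 1 := by
  linarith [two_mul_triangle n, two_mul_triangle (n + 1)]

lemma triangle_neg_succ (n : ℤ) : (triangle (-(n + 1)) : ℤ) = triangle (-n) + n := by
  linarith [two_mul_triangle (-n), two_mul_triangle (-(n + 1))]

lemma triangle_add_triangle_neg (n : ℤ) : triangle n + triangle (-n) = n.natAbs * n.natAbs := by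
  zify
  rw [abs_mul_abs_self]
  linarith [two_mul_triangle n, two_mul_triangle (-n)]

def jacobiTerm (a b : R) (n : ℤ) : R := a ^ triangle n * b ^ triangle (-n)

lemma mul_jacobiTerm_left (a b : R) {N : ℕ} {n : ℤ} (h : n ≤ N) :
    a * (a * b) ^ N * jacobiTerm a b n = (a * b) ^ (N - n).toNat * jacobiTerm a b (n + 1) := by
  have ha : 1 + N + triangle n = (N - n).toNat + triangle (n + 1) := by
    have := triangle_succ n; omega
  have hb : N + triangle (-n) = (N - n).toNat + triangle (-(n + 1)) := by
    have := triangle_neg_succ n; omega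
  calc a * (a * b) ^ N * jacobiTerm a b n
      = a ^ (1 + N + triangle n) * b ^ (N + triangle (-n)) := by rw [jacobiTerm]; ring
    _ = _ := by rw [ha, hb, jacobiTerm]; ring

lemma mul_jacobiTerm_right (a b : R) {M : ℕ} {n : ℤ} (h : -M ≤ n) :
    b * (a * b) ^ M * jacobiTerm a b n = (a * b) ^ (M + n).toNat * jacobiTerm a b (n - 1) := by
  have ha : M + triangle n = (M + n).toNat + triangle (n - 1) := by
    have := triangle_succ (n - 1); rw [sub_add_cancel] at this; omega
  have hb : 1 + M + triangle (-n) = (M + n).toNat + triangle (-(n - 1)) := by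
    have := triangle_neg_succ (n - 1); rw [sub_add_cancel] at this; omega
  calc b * (a * b) ^ M * jacobiTerm a b n
      = a ^ (M + triangle n) * b ^ (1 + M + triangle (-n)) := by rw [jacobiTerm]; ring
    _ = _ := by rw [ha, hb, jacobiTerm]; ring

lemma sum_qBinom_mul_jacobiTerm_mul_one_add_left (a b : R) (N M : ℕ) :
    (∑ k ∈ range (N + M + 1), qBinom (a * b) (N + M) k * jacobiTerm a b (k - M)) *
        (1 + a * (a * b) ^ N) =
      ∑ k ∈ range (N + M + 2), qBinom (a * b) (N + M + 1) k * jacobiTerm a b (k - M) := by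
  set Q := a * b
  set m := N + M
  have hshift : ∀ k ∈ range (m + 1), qBinom Q m k * jacobiTerm a b (k - M) * (a * Q ^ N) =
      Q ^ (m - k) * qBinom Q m k * jacobiTerm a b ((k + 1 : ℕ) - M) := by
    intro k hk
    rw [mem_range] at hk
    have e := mul_jacobiTerm_left a b (N := N) (n := k - M) (by omega)
    rw [show (N - (k - M : ℤ)).toNat = m - k by omega,
      show (k : ℤ) - M + 1 = ((k + 1 : ℕ) : ℤ) - M by push_cast; ring] at e
    linear_combination qBinom Q m k * e
  have hpascal : ∀ k ∈ range (m + 1),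
      qBinom Q (m + 1) (k + 1) * jacobiTerm a b ((k + 1 : ℕ) - M) =
        Q ^ (m - k) * qBinom Q m k * jacobiTerm a b ((k + 1 : ℕ) - M) +
          qBinom Q m (k + 1) * jacobiTerm a b ((k + 1 : ℕ) - M) := by
    intro k hk
    rw [qBinom_succ_succ' Q (Nat.lt_succ_iff.1 (mem_range.1 hk))]; ring
  have hpeel : ∑ k ∈ range (m + 1), qBinom Q m k * jacobiTerm a b (k - M) =
      ∑ k ∈ range (m + 1), qBinom Q m (k + 1) * jacobiTerm a b ((k + 1 : ℕ) - M) +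
        jacobiTerm a b ((0 : ℕ) - M) := by
    rw [sum_range_succ', sum_range_succ (fun k => qBinom Q m (k + 1) * _),
      qBinom_eq_zero_of_lt Q m.lt_succ_self]
    simp
  rw [mul_add, mul_one, sum_mul, sum_congr rfl hshift, hpeel, sum_range_succ' _ (m + 1),
    sum_congr rfl hpascal, sum_add_distrib, qBinom_zero_right, one_mul]
  abel

lemma sum_qBinom_mul_jacobiTerm_mul_one_add_right (a b : R) (N M : ℕ) :
    (∑ k ∈ range (N + M + 1), qBinom (a * b) (N + M) k * jacobiTerm a b (k - M)) *
        (1 + b * (a * b) ^ M) =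
      ∑ k ∈ range (N + (M + 1) + 1), qBinom (a * b) (N + (M + 1)) k *
        jacobiTerm a b (k - (M + 1 : ℕ)) := by
  set Q := a * b
  set m := N + M
  have hshift : ∀ k ∈ range (m + 1), qBinom Q m k * jacobiTerm a b (k - M) * (b * Q ^ M) =
      Q ^ k * qBinom Q m k * jacobiTerm a b (k - (M + 1 : ℕ)) := by
    intro k _
    have e := mul_jacobiTerm_right a b (M := M) (n := k - M) (by omega)
    rw [show ((M : ℤ) + (k - M)).toNat = k by omega,
      show (k : ℤ) - M - 1 = k - ((M + 1 : ℕ) : ℤ) by push_cast; ring] at e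
    linear_combination qBinom Q m k * e
  have hpascal : ∀ k ∈ range (m + 1),
      qBinom Q (m + 1) (k + 1) * jacobiTerm a b ((k + 1 : ℕ) - (M + 1 : ℕ)) =
        qBinom Q m k * jacobiTerm a b (k - M) +
          Q ^ (k + 1) * qBinom Q m (k + 1) * jacobiTerm a b ((k + 1 : ℕ) - (M + 1 : ℕ)) := by
    intro k _
    rw [qBinom_succ_succ, show ((k + 1 : ℕ) : ℤ) - (M + 1 : ℕ) = k - M by push_cast; ring]
    ring
  have hpeel : ∑ k ∈ range (m + 1), Q ^ k * qBinom Q m k * jacobiTerm a b (k - (M + 1 : ℕ)) =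
      ∑ k ∈ range (m + 1), Q ^ (k + 1) * qBinom Q m (k + 1) *
        jacobiTerm a b ((k + 1 : ℕ) - (M + 1 : ℕ)) + jacobiTerm a b ((0 : ℕ) - (M + 1 : ℕ)) := by
    rw [sum_range_succ', sum_range_succ (fun k => Q ^ (k + 1) * qBinom Q m (k + 1) * _),
      qBinom_eq_zero_of_lt Q m.lt_succ_self]
    simp
  rw [show N + (M + 1) = m + 1 by omega, mul_add, mul_one, sum_mul, sum_congr rfl hshift, hpeel,
    sum_range_succ' _ (m + 1), sum_congr rfl hpascal, sum_add_distrib, qBinom_zero_right, one_mul]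
  abel

theorem prod_one_add_mul_prod_one_add (a b : R) (N M : ℕ) :
    (∏ j ∈ range N, (1 + a * (a * b) ^ j)) * ∏ j ∈ range M, (1 + b * (a * b) ^ j) =
      ∑ k ∈ range (N + M + 1), qBinom (a * b) (N + M) k * jacobiTerm a b (k - M) := by
  induction N with
  | zero =>
    rw [prod_range_zero, one_mul]
    induction M with
    | zero => simp [jacobiTerm, triangle]
    | succ M ih => rw [prod_range_succ, ih, sum_qBinom_mul_jacobiTerm_mul_one_add_right]
  | succ N ih =>
    rw [prod_range_succ, mul_right_comm, ih, sum_qBinom_mul_jacobiTerm_mul_one_add_left,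
      show N + 1 + M = N + M + 1 by omega]

def qBinomCentral (Q : R) (N : ℕ) (n : ℤ) : R :=
  if -(N : ℤ) ≤ n then qBinom Q (2 * N) (n + N).toNat else 0

lemma qBinomCentral_eq_zero (Q : R) {N : ℕ} {n : ℤ} (h : N < n.natAbs) :
    qBinomCentral Q N n = 0 := by
  unfold qBinomCentral
  split_ifs
  · exact qBinom_eq_zero_of_lt Q (by omega)
  · rfl

lemma tsum_qBinomCentral_mul [TopologicalSpace R] (Q : R) (N : ℕ) (f : ℤ → R) :
    ∑' n, qBinomCentral Q N n * f n =
      ∑ k ∈ range (2 * N + 1), qBinom Q (2 * N) k * f (k - N) := by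
  rw [tsum_eq_sum (s := (range (2 * N + 1)).image fun k : ℕ => (k : ℤ) - N),
    sum_image fun i _ j _ h => by simpa using h]
  · refine sum_congr rfl fun k _ => ?_
    rw [qBinomCentral, if_pos (by omega), show ((k : ℤ) - N + N).toNat = k by omega]
  · intro n hn
    have hout : N < n.natAbs := by
      by_contra! h
      exact hn (mem_image.2 ⟨(n + N).toNat, mem_range.2 (by omega), by omega⟩)
    rw [qBinomCentral_eq_zero Q hout, zero_mul]

end CommRing

lemma exists_norm_le_of_tendsto {E : Type*} [SeminormedAddCommGroup E] {u : ℕ → E} {x : E}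
    (hu : Tendsto u atTop (𝓝 x)) : ∃ C, ∀ m, ‖u m‖ ≤ C := by
  obtain ⟨C, hC⟩ := isBounded_iff_forall_norm_le.1 (Metric.isBounded_range_of_tendsto u hu)
  exact ⟨C, fun m => hC _ ⟨m, rfl⟩⟩

section NormedField

variable {K : Type*} [NormedField K]

lemma one_sub_ne_zero_of_norm_lt_one {z : K} (hz : ‖z‖ < 1) : 1 - z ≠ 0 :=
  sub_ne_zero.2 fun h => by simp [← h] at hz

lemma qPoch_ne_zero {Q : K} (hQ : ‖Q‖ < 1) (m : ℕ) : qPoch Q m ≠ 0 :=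
  prod_ne_zero_iff.2 fun j _ => one_sub_ne_zero_of_norm_lt_one <| by
    rw [norm_pow]; exact pow_lt_one₀ (norm_nonneg Q) hQ j.succ_ne_zero

lemma qPoch_mul_qBinomCentral {Q : K} (hQ : ‖Q‖ < 1) {N : ℕ} {n : ℤ} (h : n.natAbs ≤ N) :
    qPoch Q N * qBinomCentral Q N n =
      qPoch Q N * qPoch Q (2 * N) / (qPoch Q (N + n).toNat * qPoch Q (N - n).toNat) := by
  have hprod := qBinom_mul_qPoch_mul_qPoch Q (m := 2 * N) (k := (n + N).toNat) (by omega)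
  rw [show 2 * N - (n + N).toNat = (N - n).toNat by omega,
    show (n + N).toNat = (N + n).toNat by omega] at hprod
  rw [qBinomCentral, if_pos (by omega), show (n + N).toNat = (N + n).toNat by omega,
    eq_div_iff (mul_ne_zero (qPoch_ne_zero hQ _) (qPoch_ne_zero hQ _)), ← hprod]
  ring

lemma norm_jacobiTerm_le {a b : K} (ha : ‖a‖ ≤ 1) (hb : ‖b‖ ≤ 1) (n : ℤ) :
    ‖jacobiTerm a b n‖ ≤ max ‖a‖ ‖b‖ ^ n.natAbs := by
  have hρ0 : 0 ≤ max ‖a‖ ‖b‖ := (norm_nonneg a).trans (le_max_left _ _)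
  calc ‖jacobiTerm a b n‖ ≤ max ‖a‖ ‖b‖ ^ triangle n * max ‖a‖ ‖b‖ ^ triangle (-n) := by
        rw [jacobiTerm, norm_mul, norm_pow, norm_pow]
        gcongr
        exacts [le_max_left _ _, le_max_right _ _]
    _ = max ‖a‖ ‖b‖ ^ (n.natAbs * n.natAbs) := by rw [← pow_add, triangle_add_triangle_neg]
    _ ≤ max ‖a‖ ‖b‖ ^ n.natAbs := pow_le_pow_of_le_one hρ0 (max_le ha hb) (Nat.le_mul_self _)

lemma summable_norm_pow_comp {w : K} (hw : ‖w‖ < 1) {c : ℕ → ℕ} (hc : Function.Injective c) :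
    Summable fun n => ‖w ^ c n‖ := by
  simp only [norm_pow]
  exact (summable_geometric_of_lt_one (norm_nonneg w) hw).comp_injective hc

variable [CompleteSpace K]

lemma multipliable_one_sub_pow_comp {w : K} (hw : ‖w‖ < 1) {c : ℕ → ℕ}
    (hc : Function.Injective c) : Multipliable fun n => 1 - w ^ c n := by
  simpa only [sub_eq_add_neg] using multipliable_one_add_of_summable (f := fun n => -(w ^ c n))
    (by simpa only [norm_neg] using summable_norm_pow_comp hw hc)

lemma tprod_one_sub_pow_comp_ne_zero {w : K} (hw : ‖w‖ < 1) {c : ℕ → ℕ}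
    (hc : Function.Injective c) (hc0 : ∀ n, c n ≠ 0) : ∏' n, (1 - w ^ c n) ≠ 0 := by
  have hne : ∀ n, 1 + -(w ^ c n) ≠ 0 := fun n => by
    rw [← sub_eq_add_neg]
    refine one_sub_ne_zero_of_norm_lt_one ?_
    rw [norm_pow]
    exact pow_lt_one₀ (norm_nonneg w) hw (hc0 n)
  simpa only [sub_eq_add_neg] using tprod_one_add_ne_zero_of_summable hne
    (by simpa only [norm_neg] using summable_norm_pow_comp hw hc)

lemma tprod_one_add_eq_prod_tprod_mul_add {f : ℕ → K} (hf : Summable (‖f ·‖)) (k : ℕ)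
    [NeZero k] : ∏' n, (1 + f n) = ∏ r : Fin k, ∏' m, (1 + f (m * k + r)) := by
  have hmul : ∀ {ι : Type} (g : ι → ℕ), Function.Injective g →
      Multipliable fun i => 1 + f (g i) := fun g hg =>
    multipliable_one_add_of_summable (hf.comp_injective hg)
  rw [← (Nat.divModEquiv k).symm.tprod_eq, ← (Equiv.prodComm _ _).tprod_eq,
    Multipliable.tprod_prod' (hmul (fun p => (Nat.divModEquiv k).symm (Equiv.prodComm _ _ p))
      ((Nat.divModEquiv k).symm.injective.comp (Equiv.prodComm _ _).injective)) fun r =>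
        hmul _ fun i j h => by simpa [NeZero.ne k] using h,
    tprod_fintype]
  rfl

variable {Q : K}

lemma tendsto_qPoch (hQ : ‖Q‖ < 1) :
    Tendsto (qPoch Q) atTop (𝓝 (∏' n : ℕ, (1 - Q ^ (n + 1)))) :=
  (multipliable_one_sub_pow_comp hQ (add_left_injective 1)).hasProd.tendsto_prod_nat

lemma tprod_one_sub_pow_succ_ne_zero (hQ : ‖Q‖ < 1) : ∏' n : ℕ, (1 - Q ^ (n + 1)) ≠ 0 :=
  tprod_one_sub_pow_comp_ne_zero hQ (add_left_injective 1) fun n => n.succ_ne_zero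

lemma tendsto_qPoch_mul_qBinomCentral (hQ : ‖Q‖ < 1) (n : ℤ) :
    Tendsto (fun N => qPoch Q N * qBinomCentral Q N n) atTop (𝓝 1) := by
  set L := ∏' n : ℕ, (1 - Q ^ (n + 1))
  have hL := tprod_one_sub_pow_succ_ne_zero hQ
  have hshift : ∀ z : ℤ, Tendsto (fun N : ℕ => qPoch Q (N + z).toNat) atTop (𝓝 L) := fun z =>
    (tendsto_qPoch hQ).comp (tendsto_atTop_atTop.2 fun B => ⟨B + z.natAbs, fun c hc => by omega⟩)
  have hlim := ((tendsto_qPoch hQ).mul ((tendsto_qPoch hQ).comp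
    (tendsto_id.const_mul_atTop' two_pos))).div ((hshift n).mul (hshift (-n))) (mul_ne_zero hL hL)
  rw [div_self (mul_ne_zero hL hL)] at hlim
  refine hlim.congr' ((eventually_ge_atTop n.natAbs).mono fun N hN => ?_)
  simp only [Pi.div_apply, Function.comp_apply, id, qPoch_mul_qBinomCentral hQ hN,
    ← sub_eq_add_neg]

lemma exists_norm_qPoch_mul_qBinomCentral_le (hQ : ‖Q‖ < 1) :
    ∃ C, ∀ N n, ‖qPoch Q N * qBinomCentral Q N n‖ ≤ C := by
  obtain ⟨U, hU⟩ := exists_norm_le_of_tendsto (tendsto_qPoch hQ)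
  obtain ⟨V, hV⟩ := exists_norm_le_of_tendsto
    ((tendsto_qPoch hQ).inv₀ (tprod_one_sub_pow_succ_ne_zero hQ))
  have hU0 : 0 ≤ U := (norm_nonneg _).trans (hU 0)
  have hV0 : 0 ≤ V := (norm_nonneg _).trans (hV 0)
  refine ⟨U * U * (V * V), fun N n => ?_⟩
  rcases le_or_gt n.natAbs N with h | h
  · rw [qPoch_mul_qBinomCentral hQ h, div_eq_mul_inv, mul_inv, norm_mul, norm_mul, norm_mul]
    gcongr
    exacts [hU _, hU _, hV _, hV _]
  · rw [qBinomCentral_eq_zero Q h, mul_zero, norm_zero]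
    positivity

lemma summable_pow_natAbs {r : ℝ} (hr0 : 0 ≤ r) (hr : r < 1) :
    Summable fun n : ℤ => r ^ n.natAbs :=
  Summable.of_nat_of_neg (by simpa using summable_geometric_of_lt_one hr0 hr)
    (by simpa using summable_geometric_of_lt_one hr0 hr)

/-- Jacobi's triple product identity. -/
theorem tsum_jacobiTerm {a b : K} (ha : ‖a‖ < 1) (hb : ‖b‖ < 1) :
    ∑' n : ℤ, jacobiTerm a b n =
      ∏' n : ℕ, (1 - (a * b) ^ (n + 1)) * (1 + a * (a * b) ^ n) * (1 + b * (a * b) ^ n) := by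
  have hQ : ‖a * b‖ < 1 := by
    rw [norm_mul]; exact mul_lt_one_of_nonneg_of_lt_one_left (norm_nonneg a) ha hb.le
  have hmul : ∀ c : K, Multipliable fun n : ℕ => 1 + c * (a * b) ^ n := fun c =>
    multipliable_one_add_of_summable <| by
      simpa only [norm_mul, norm_pow] using
        (summable_geometric_of_lt_one (norm_nonneg (a * b)) hQ).mul_left ‖c‖
  have hprod := (((multipliable_one_sub_pow_comp hQ (add_left_injective 1)).mul (hmul a)).mul
    (hmul b)).hasProd.tendsto_prod_nat
  have hfinite : ∀ N : ℕ,
      ∏ j ∈ range N, (1 - (a * b) ^ (j + 1)) * (1 + a * (a * b) ^ j) * (1 + b * (a * b) ^ j) =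
        ∑' n, qPoch (a * b) N * qBinomCentral (a * b) N n * jacobiTerm a b n := by
    intro N
    simp only [mul_assoc, prod_mul_distrib, tsum_mul_left]
    rw [tsum_qBinomCentral_mul, two_mul, ← prod_one_add_mul_prod_one_add, qPoch]
  obtain ⟨C, hC⟩ := exists_norm_qPoch_mul_qBinomCentral_le hQ
  have hlim : Tendsto
      (fun N : ℕ => ∑' n, qPoch (a * b) N * qBinomCentral (a * b) N n * jacobiTerm a b n)
      atTop (𝓝 (∑' n, jacobiTerm a b n)) := by
    refine tendsto_tsum_of_dominated_convergence
      ((summable_pow_natAbs ((norm_nonneg a).trans (le_max_left _ _)) (max_lt ha hb)).mul_left C)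
      (fun n => by simpa using (tendsto_qPoch_mul_qBinomCentral hQ n).mul_const (jacobiTerm a b n))
      (Eventually.of_forall fun N n => ?_)
    rw [norm_mul]
    exact mul_le_mul (hC N n) (norm_jacobiTerm_le ha.le hb.le n) (norm_nonneg _)
      ((norm_nonneg _).trans (hC 0 0))
  simp only [hfinite] at hprod
  exact tendsto_nhds_unique hlim hprod

end NormedField

lemma eulerPhi_mul_rrA {w : ℂ} (hw : ‖w‖ < 1) :
    eulerPhi w * rrA w =
      ∏' n : ℕ, (1 - w ^ (5 * n + 5)) * (1 - w ^ (5 * n + 4)) * (1 - w ^ (5 * n + 1)) := by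
  have hinj : ∀ r : ℕ, Function.Injective fun n : ℕ => 5 * n + r := fun r i j h => by
    simpa using h
  have hmul : ∀ r, Multipliable fun n : ℕ => 1 - w ^ (5 * n + r) := fun r =>
    multipliable_one_sub_pow_comp hw (hinj r)
  set P : ℕ → ℂ := fun r => ∏' n : ℕ, (1 - w ^ (5 * n + r))
  have hP : ∀ r, r ≠ 0 → P r ≠ 0 := fun r hr =>
    tprod_one_sub_pow_comp_ne_zero hw (hinj r) fun n => by omega
  have hsplit : eulerPhi w = P 1 * P 2 * P 3 * P 4 * P 5 := by
    have := tprod_one_add_eq_prod_tprod_mul_add (f := fun n => -(w ^ (n + 1)))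
      (by simpa only [norm_neg] using summable_norm_pow_comp hw (add_left_injective 1)) 5
    simp only [← sub_eq_add_neg, Fin.prod_univ_five] at this
    rw [eulerPhi, this]
    simp [P, mul_comm _ 5, add_assoc]
  have hrrA : rrA w = (P 3 * P 2)⁻¹ := by
    have h32 : ∏' n : ℕ, (1 - w ^ (5 * n + 3)) * (1 - w ^ (5 * n + 2)) = P 3 * P 2 :=
      (hmul 3).tprod_mul (hmul 2)
    rw [rrA, Multipliable.tprod_inv₀ ((hmul 3).mul (hmul 2))
      (h32 ▸ mul_ne_zero (hP 3 three_ne_zero) (hP 2 two_ne_zero)), h32]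
  rw [hsplit, hrrA, Multipliable.tprod_mul ((hmul 5).mul (hmul 4)) (hmul 1),
    Multipliable.tprod_mul (hmul 5) (hmul 4)]
  field_simp [hP 3 three_ne_zero, hP 2 two_ne_zero]
  ring

lemma tsum_jacobiTerm_neg_pow_four_neg {w : ℂ} (hw : ‖w‖ < 1) :
    ∑' n : ℤ, jacobiTerm (-w ^ 4) (-w) n = eulerPhi w * rrA w := by
  have hw4 : ‖-w ^ 4‖ < 1 := by
    rw [norm_neg, norm_pow]; exact pow_lt_one₀ (norm_nonneg w) hw (by norm_num)
  rw [tsum_jacobiTerm hw4 (by rwa [norm_neg]), eulerPhi_mul_rrA hw]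
  refine tprod_congr fun n => ?_
  rw [neg_mul_neg, ← pow_succ, ← pow_mul, ← pow_mul]
  ring

def equivResidueTwoModThree : ℤ ≃ {k : ℤ // k % 3 = 2} where
  toFun n := ⟨-3 * n - 1, by omega⟩
  invFun k := -(k + 1) / 3
  left_inv n := show -((-3 * n - 1) + 1) / 3 = n by omega
  right_inv k := Subtype.ext (by have := k.2; dsimp only; omega)

lemma neg_one_zpow_neg_three_mul_sub_one {K : Type*} [DivisionRing K] (n : ℤ) :
    (-1 : K) ^ (-3 * n - 1) = -(-1) ^ (n.natAbs * n.natAbs) := by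
  rcases Int.even_or_odd n with hn | hn
  · rw [Odd.neg_one_zpow, Even.neg_one_pow (Nat.even_mul.2 (Or.inl (Int.natAbs_even.2 hn)))]
    obtain ⟨j, rfl⟩ := hn
    exact ⟨-3 * j - 1, by ring⟩
  · rw [Even.neg_one_zpow,
      Odd.neg_one_pow (Nat.odd_mul.2 ⟨Int.natAbs_odd.2 hn, Int.natAbs_odd.2 hn⟩), neg_neg]
    obtain ⟨j, rfl⟩ := hn
    exact ⟨-3 * j - 2, by ring⟩

lemma exponent_neg_three_mul_sub_one (n : ℤ) :
    (-3 * n - 1) * (5 * (-3 * n - 1) + 1) / 2 =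
      ((2 + 9 * (4 * triangle n + triangle (-n)) : ℕ) : ℤ) := by
  refine Int.ediv_eq_of_eq_mul_right two_ne_zero ?_
  push_cast
  linear_combination (-36) * two_mul_triangle n - 9 * two_mul_triangle (-n)

lemma neg_one_zpow_mul_zpow_neg_three_mul_sub_one {K : Type*} [Field K] (q : K) (n : ℤ) :
    (-1 : K) ^ (-3 * n - 1) * q ^ ((-3 * n - 1) * (5 * (-3 * n - 1) + 1) / 2) =
      -q ^ 2 * jacobiTerm (-(q ^ 9) ^ 4) (-q ^ 9) n := by
  rw [exponent_neg_three_mul_sub_one, zpow_natCast, neg_one_zpow_neg_three_mul_sub_one,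
    ← triangle_add_triangle_neg, jacobiTerm]
  ring

end QSeries

theorem bPhi_part_two_mod_three (q : ℂ) (hq : ‖q‖ < 1) :
    ∑' k : {n : ℤ // n % 3 = 2},
        (-1 : ℂ) ^ (k : ℤ) * q ^ ((k : ℤ) * (5 * (k : ℤ) + 1) / 2) =
      -q ^ 2 * eulerPhi (q ^ 9) * rrA (q ^ 9) := by
  have hq9 : ‖q ^ 9‖ < 1 := by
    rw [norm_pow]; exact pow_lt_one₀ (norm_nonneg q) hq (by norm_num)
  rw [← QSeries.equivResidueTwoModThree.tsum_eq, mul_assoc,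
    ← QSeries.tsum_jacobiTerm_neg_pow_four_neg hq9, ← tsum_mul_left]
  exact tsum_congr fun n => QSeries.neg_one_zpow_mul_zpow_neg_three_mul_sub_one q n
end

section
/- The branching coefficients for V^{Λ₀} are unique: if f₁, g₁, f₂, g₂ are functions analytic on the open unit disc in ℂ such that f₁(q³)·a(q) + q·g₁(q³)·b(q) = f₂(q³)·a(q) + q·g₂(q³)·b(q) for all complex q with |q| < 1, then f₁ = f₂ and g₁ = g₂ on the open unit disc. (Uniqueness of the solution of equation (3.6), proved in Section 3.1 via evaluation at q and ζq for a primitive cube root of unity ζ and invertibility of the resulting 2×2 determinant.) -/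
open scoped BigOperators

/-!
Write `F = f₁ - f₂` and `G = g₁ - g₂`, so that `F(q³) a(q) + q G(q³) b(q) = 0`. Replacing `q` by
`ζq` for a primitive cube root of unity `ζ` leaves `q³` unchanged, so `(F(q³), q G(q³))` solves a
`2 × 2` linear system with determinant `D(q) = a(q) ζ b(ζq) - a(ζq) b(q)`. The products defining
`a` and `b` converge uniformly near `0`, so both are continuous at `0` with value `1`; hence
`D(0) = ζ - 1 ≠ 0`, so `F` and `G` vanish at `q³` for all small `q ≠ 0`. These points accumulate at `0`, and the identity theorem gives `F = G = 0`.
-/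

open Filter Metric Set Topology

section UniformProducts

variable {α R : Type*} [TopologicalSpace α] {K : Set α}

lemma HasProdUniformlyOn.continuousOn {ι : Type*} [CommMonoid R] [UniformSpace R]
    [ContinuousMul R] {f : ι → α → R} {g : α → R} (h : HasProdUniformlyOn f g K)
    (hf : ∀ i, ContinuousOn (f i) K) : ContinuousOn g K :=
  h.tendstoUniformlyOn.continuousOn
    (Frequently.of_forall fun s ↦ continuousOn_finsetProd s fun i _ ↦ hf i)

lemma hasProdUniformlyOn_of_norm_sub_one_le [NormedCommRing R] [NormOneClass R] [CompleteSpace R]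
    {f : ℕ → α → R} (hK : IsCompact K) {u : ℕ → ℝ} (hu : Summable u)
    (h : ∀ n, ∀ x ∈ K, ‖f n x - 1‖ ≤ u n) (hf : ∀ n, ContinuousOn (f n) K) :
    HasProdUniformlyOn f (fun x ↦ ∏' n, f n x) K := by
  simpa using Summable.hasProdUniformlyOn_nat_one_add hK hu (Eventually.of_forall h)
    fun n ↦ (hf n).sub continuousOn_const

end UniformProducts

section RogersRamanujanProducts

variable {a b : ℕ → ℕ}

lemma norm_pow_le_pow_of_le {q : ℂ} {r : ℝ} (hr : r ≤ 1) (hq : ‖q‖ ≤ r) {n k : ℕ}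
    (hk : n ≤ k) : ‖q ^ k‖ ≤ r ^ n :=
  calc ‖q ^ k‖ = ‖q‖ ^ k := norm_pow q k
    _ ≤ r ^ k := pow_le_pow_left₀ (norm_nonneg q) hq k
    _ ≤ r ^ n := pow_le_pow_of_le_one ((norm_nonneg q).trans hq) hr hk

lemma norm_one_sub_pow_mul_one_sub_pow_sub_one_le {q : ℂ} {r : ℝ} (hr : r ≤ 1) (hq : ‖q‖ ≤ r)
    {n k l : ℕ} (hk : n ≤ k) (hl : n ≤ l) : ‖(1 - q ^ k) * (1 - q ^ l) - 1‖ ≤ 3 * r ^ n := by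
  have hqk := norm_pow_le_pow_of_le hr hq hk
  have hql := norm_pow_le_pow_of_le hr hq hl
  have hql_one : ‖q ^ l‖ ≤ 1 := norm_pow_le_pow_of_le hr hq (Nat.zero_le l) |>.trans_eq (pow_zero r)
  calc ‖(1 - q ^ k) * (1 - q ^ l) - 1‖ = ‖q ^ k * q ^ l - q ^ k - q ^ l‖ := by ring_nf
    _ ≤ ‖q ^ k‖ * ‖q ^ l‖ + ‖q ^ k‖ + ‖q ^ l‖ := by
      grw [norm_sub_le, norm_sub_le, norm_mul_le]
    _ ≤ 3 * r ^ n := by nlinarith [norm_nonneg (q ^ k)]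

lemma hasProdUniformlyOn_one_sub_pow_mul_one_sub_pow (ha : ∀ n, n ≤ a n) (hb : ∀ n, n ≤ b n)
    {r : ℝ} (hr₀ : 0 ≤ r) (hr : r < 1) :
    HasProdUniformlyOn (fun n (q : ℂ) ↦ (1 - q ^ a n) * (1 - q ^ b n))
      (fun q ↦ ∏' n, (1 - q ^ a n) * (1 - q ^ b n)) (closedBall 0 r) := by
  refine hasProdUniformlyOn_of_norm_sub_one_le (isCompact_closedBall 0 r)
    ((summable_geometric_of_lt_one hr₀ hr).mul_left 3) (fun n q hq ↦ ?_) fun n ↦ by fun_prop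
  exact norm_one_sub_pow_mul_one_sub_pow_sub_one_le hr.le (mem_closedBall_zero_iff.1 hq)
    (ha n) (hb n)

lemma continuousAt_tprod_inv_one_sub_pow_mul_one_sub_pow (ha : ∀ n, n < a n)
    (hb : ∀ n, n < b n) :
    ContinuousAt (fun q : ℂ ↦ ∏' n, ((1 - q ^ a n) * (1 - q ^ b n))⁻¹) 0 := by
  set Q : ℂ → ℂ := fun q ↦ ∏' n, (1 - q ^ a n) * (1 - q ^ b n)
  have hprod := hasProdUniformlyOn_one_sub_pow_mul_one_sub_pow (fun n ↦ (ha n).le)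
    (fun n ↦ (hb n).le) (r := 1 / 2) (by norm_num) (by norm_num)
  have hball : closedBall (0 : ℂ) (1 / 2) ∈ 𝓝 0 := closedBall_mem_nhds 0 (by norm_num)
  have hQ : ContinuousAt Q 0 :=
    (hprod.continuousOn fun n ↦ by fun_prop).continuousAt hball
  have hQ₀ : Q 0 ≠ 0 := by
    simp [Q, zero_pow (Nat.zero_lt_of_lt (ha _)).ne', zero_pow (Nat.zero_lt_of_lt (hb _)).ne']
  refine (hQ.inv₀ hQ₀).congr ?_
  filter_upwards [hball, hQ.eventually_ne hQ₀] with q hq hQq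
  exact ((hprod.hasProd hq).inv₀ hQq).tprod_eq.symm

lemma continuousAt_rrA : ContinuousAt rrA 0 :=
  continuousAt_tprod_inv_one_sub_pow_mul_one_sub_pow (fun n ↦ by omega) fun n ↦ by omega

lemma continuousAt_rrB : ContinuousAt rrB 0 :=
  continuousAt_tprod_inv_one_sub_pow_mul_one_sub_pow (fun n ↦ by omega) fun n ↦ by omega

lemma rrA_zero : rrA 0 = 1 := by simp [rrA]

lemma rrB_zero : rrB 0 = 1 := by simp [rrB]

end RogersRamanujanProducts

section CubeDecomposition

lemma frequently_of_eventually_comp_pow {𝕜 : Type*} [NontriviallyNormedField 𝕜] {p : 𝕜 → Prop}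
    {n : ℕ} (hn : n ≠ 0) (h : ∀ᶠ q in 𝓝[≠] 0, p (q ^ n)) : ∃ᶠ z in 𝓝[≠] 0, p z := by
  have hpow : Tendsto (· ^ n) (𝓝[≠] (0 : 𝕜)) (𝓝[≠] 0) := by
    refine tendsto_nhdsWithin_iff.2 ⟨?_, eventually_nhdsWithin_of_forall fun q hq ↦ pow_ne_zero n hq⟩
    simpa [zero_pow hn] using ((continuous_pow n).tendsto (0 : 𝕜)).mono_left nhdsWithin_le_nhds
  exact hpow.frequently h.frequently

variable {A B F G : ℂ → ℂ}

lemma eventually_eq_zero_of_cube_decomposition (hA : ContinuousAt A 0) (hB : ContinuousAt B 0)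
    (hA₀ : A 0 ≠ 0) (hB₀ : B 0 ≠ 0)
    (h : ∀ᶠ q in 𝓝 0, F (q ^ 3) * A q + q * G (q ^ 3) * B q = 0) :
    ∀ᶠ q in 𝓝[≠] 0, F (q ^ 3) = 0 ∧ G (q ^ 3) = 0 := by
  obtain ⟨ζ, hζ⟩ : ∃ ζ : ℂ, IsPrimitiveRoot ζ 3 := ⟨_, Complex.isPrimitiveRoot_exp 3 (by norm_num)⟩
  have hζq : Tendsto (ζ * ·) (𝓝 (0 : ℂ)) (𝓝 0) := by
    simpa using (continuous_const_mul ζ).tendsto (0 : ℂ)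
  set D : ℂ → ℂ := fun q ↦ A q * (ζ * B (ζ * q)) - A (ζ * q) * B q
  have hD : Tendsto D (𝓝 0) (𝓝 ((ζ - 1) * (A 0 * B 0))) := by
    rw [show (ζ - 1) * (A 0 * B 0) = A 0 * (ζ * B 0) - A 0 * B 0 by ring]
    exact (hA.tendsto.mul (tendsto_const_nhds.mul (hB.tendsto.comp hζq))).sub
      ((hA.tendsto.comp hζq).mul hB.tendsto)
  have hD₀ : (ζ - 1) * (A 0 * B 0) ≠ 0 :=
    mul_ne_zero (sub_ne_zero.2 (hζ.ne_one (by norm_num))) (mul_ne_zero hA₀ hB₀)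
  filter_upwards [nhdsWithin_le_nhds h, nhdsWithin_le_nhds (hζq.eventually h),
    nhdsWithin_le_nhds (hD.eventually_ne hD₀), self_mem_nhdsWithin] with q hq hζq' hDq hq₀
  simp only [mul_pow, hζ.pow_eq_one, one_mul] at hζq'
  have hF : F (q ^ 3) * D q = 0 := by
    linear_combination (ζ * B (ζ * q)) * hq - B q * hζq'
  have hG : q * G (q ^ 3) * D q = 0 := by
    linear_combination A q * hζq' - A (ζ * q) * hq
  exact ⟨(mul_eq_zero.1 hF).resolve_right hDq,
    (mul_eq_zero.1 ((mul_eq_zero.1 hG).resolve_right hDq)).resolve_left hq₀⟩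

theorem eqOn_zero_of_cube_decomposition (hA : ContinuousAt A 0) (hB : ContinuousAt B 0)
    (hA₀ : A 0 ≠ 0) (hB₀ : B 0 ≠ 0) {U : Set ℂ} (hF : AnalyticOnNhd ℂ F U)
    (hG : AnalyticOnNhd ℂ G U) (hU : IsPreconnected U) (h₀ : 0 ∈ U)
    (h : ∀ᶠ q in 𝓝 0, F (q ^ 3) * A q + q * G (q ^ 3) * B q = 0) :
    EqOn F 0 U ∧ EqOn G 0 U := by
  have hzero := eventually_eq_zero_of_cube_decomposition hA hB hA₀ hB₀ h
  exact ⟨hF.eqOn_zero_of_preconnected_of_frequently_eq_zero hU h₀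
      (frequently_of_eventually_comp_pow three_ne_zero (hzero.mono fun _ ↦ And.left)),
    hG.eqOn_zero_of_preconnected_of_frequently_eq_zero hU h₀
      (frequently_of_eventually_comp_pow three_ne_zero (hzero.mono fun _ ↦ And.right))⟩

end CubeDecomposition

theorem branching_coefficients_unique
    (f₁ g₁ f₂ g₂ : ℂ → ℂ)
    (hf₁ : AnalyticOnNhd ℂ f₁ (Metric.ball 0 1))
    (hg₁ : AnalyticOnNhd ℂ g₁ (Metric.ball 0 1))
    (hf₂ : AnalyticOnNhd ℂ f₂ (Metric.ball 0 1))
    (hg₂ : AnalyticOnNhd ℂ g₂ (Metric.ball 0 1))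
    (heq : ∀ q : ℂ, ‖q‖ < 1 →
      f₁ (q ^ 3) * rrA q + q * g₁ (q ^ 3) * rrB q =
        f₂ (q ^ 3) * rrA q + q * g₂ (q ^ 3) * rrB q) :
    ∀ q ∈ Metric.ball (0 : ℂ) 1, f₁ q = f₂ q ∧ g₁ q = g₂ q := by
  have hdiff : ∀ᶠ q in 𝓝 0, (f₁ - f₂) (q ^ 3) * rrA q + q * (g₁ - g₂) (q ^ 3) * rrB q = 0 := by
    filter_upwards [ball_mem_nhds (0 : ℂ) one_pos] with q hq
    simp only [Pi.sub_apply]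
    linear_combination heq q (mem_ball_zero_iff.1 hq)
  obtain ⟨hF, hG⟩ := eqOn_zero_of_cube_decomposition continuousAt_rrA continuousAt_rrB
    (by simp [rrA_zero]) (by simp [rrB_zero]) (hf₁.sub hf₂) (hg₁.sub hg₂)
    (convex_ball 0 1).isPreconnected (mem_ball_self one_pos) hdiff
  exact fun q hq ↦ ⟨sub_eq_zero.1 (hF hq), sub_eq_zero.1 (hG hq)⟩
end
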